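/- arXiv:2511.04891 — 9 statements merged into one kernel-verified Lean document; each statement's English description precedes it below -/
import Mathlib

section
/- For any number n of agents with additive utilities over a finite set M of indivisible chores (every agent values every item strictly negatively), there exists an allocation of M that is simultaneously EF1 and envy-freeable. -/
open Finset

namespace EF1Chores

variable {α : Type*} [Fintype α] [DecidableEq α]

/-- cost of a path: sum of edge costs along consecutive pairs. -/
def pathCost (e : α → α → ℝ) : List α → ℝ
  | [] => 0
  | [_] => 0
  | a :: b :: t => e a b + pathCost e (b :: t)

@[simp] lemma pathCost_nil (e : α → α → ℝ) : pathCost e [] = 0 := rfl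
@[simp] lemma pathCost_single (e : α → α → ℝ) (a : α) : pathCost e [a] = 0 := rfl
lemma pathCost_cons_cons (e : α → α → ℝ) (a b : α) (t : List α) :
    pathCost e (a :: b :: t) = e a b + pathCost e (b :: t) := rfl

lemma pathCost_append_last (e : α → α → ℝ) :
    ∀ (xs : List α) (hne : xs ≠ []) (y : α),
      pathCost e (xs ++ [y]) = pathCost e xs + e (xs.getLast hne) y
  | [], hne, _ => absurd rfl hne
  | [a], _, y => by simp [pathCost]
  | a :: b :: t, _, y => by
      have IH := pathCost_append_last e (b :: t) (List.cons_ne_nil b t) y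
      rw [List.cons_append] at IH
      show pathCost e (a :: b :: (t ++ [y])) = pathCost e (a :: b :: t) + _
      rw [pathCost_cons_cons, pathCost_cons_cons, List.getLast_cons (List.cons_ne_nil b t), IH]
      ring

lemma pathCost_split (e : α → α → ℝ) :
    ∀ (xs : List α) (y : α) (ys : List α),
      pathCost e (xs ++ y :: ys) = pathCost e (xs ++ [y]) + pathCost e (y :: ys)
  | [], y, ys => by simp [pathCost]
  | [a], y, ys => by
      show pathCost e (a :: y :: ys) = pathCost e (a :: [y]) + pathCost e (y :: ys)
      rw [pathCost_cons_cons]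
      show _ = (e a y + pathCost e [y]) + _
      simp
  | a :: b :: t, y, ys => by
      have IH := pathCost_split e (b :: t) y ys
      rw [List.cons_append, List.cons_append] at IH
      show pathCost e (a :: b :: (t ++ y :: ys)) = pathCost e (a :: b :: (t ++ [y])) + _
      rw [pathCost_cons_cons, pathCost_cons_cons, IH]
      ring

lemma cycSum (e : α → α → ℝ) :
    ∀ (l : List α) (hl : l.Nodup) (hne : l ≠ []),
      (∑ x ∈ l.toFinset, e x (l.formPerm x))
        = pathCost e l + e (l.getLast hne) (l.head hne)
  | [], _, hne => absurd rfl hne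
  | [a], _, _ => by simp [List.formPerm_singleton]
  | a :: b :: t, hl, _ => by
      have hnd' : (b :: t).Nodup := hl.of_cons
      have hanotin : a ∉ (b :: t) := by
        have := hl.notMem; simpa using this
      set l' : List α := b :: t with hl'
      set x₀ := l'.getLast (List.cons_ne_nil _ _) with hx₀
      have hx₀mem : x₀ ∈ l' := List.getLast_mem _
      have hσ'x₀ : l'.formPerm x₀ = b := List.formPerm_apply_getLast b t
      -- sum over insert
      have hsplit : ((a :: b :: t).toFinset : Finset α) = insert a l'.toFinset := by
        simp [hl']
      rw [hsplit, Finset.sum_insert (by simpa using hanotin)]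
      have hheada : (a :: b :: t).formPerm a = b := List.formPerm_apply_head a b t hl
      rw [hheada]
      -- the rest of the sum
      have hform : ∀ x ∈ l'.toFinset,
          (a :: b :: t).formPerm x = if x = x₀ then a else l'.formPerm x := by
        intro x hx
        have hxl' : x ∈ l' := by simpa using hx
        have hmem : l'.formPerm x ∈ l' := List.formPerm_apply_mem_of_mem hxl'
        rw [List.formPerm_cons_cons, Equiv.Perm.mul_apply]
        by_cases hx0 : x = x₀
        · subst hx0
          rw [hσ'x₀, Equiv.swap_apply_right, if_pos rfl]
        · have h1 : l'.formPerm x ≠ b := by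
            intro hb
            exact hx0 (l'.formPerm.injective (hb.trans hσ'x₀.symm))
          have h2 : l'.formPerm x ≠ a := by
            intro ha; exact hanotin (ha ▸ hmem)
          rw [Equiv.swap_apply_of_ne_of_ne h2 h1, if_neg hx0]
      rw [Finset.sum_congr rfl (fun x hx => by rw [hform x hx])]
      have hx₀fin : x₀ ∈ l'.toFinset := by simpa using hx₀mem
      rw [← Finset.add_sum_erase _ _ hx₀fin, if_pos rfl]
      have herase : ∀ x ∈ l'.toFinset.erase x₀,
          e x (if x = x₀ then a else l'.formPerm x) = e x (l'.formPerm x) := by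
        intro x hx
        rw [if_neg (Finset.ne_of_mem_erase hx)]
      rw [Finset.sum_congr rfl herase]
      have hIH := cycSum e l' hnd' (List.cons_ne_nil _ _)
      have hIH' : ∑ x ∈ l'.toFinset.erase x₀, e x (l'.formPerm x)
          = pathCost e l' := by
        have := (Finset.add_sum_erase _ (fun x => e x (l'.formPerm x)) hx₀fin).symm
        rw [hIH] at this
        have hhead : l'.head (List.cons_ne_nil _ _) = b := rfl
        rw [hhead, hσ'x₀] at this
        linarith
      rw [hIH']
      have hlast : (a :: b :: t).getLast (List.cons_ne_nil _ _) = x₀ := by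
        rw [List.getLast_cons (List.cons_ne_nil _ _)]
      rw [hlast, pathCost_cons_cons]
      have hhead2 : (a :: b :: t).head (List.cons_ne_nil _ _) = a := rfl
      rw [hhead2]
      ring

lemma cycle_nonpos (e : α → α → ℝ) (he : ∀ a, e a a = 0)
    (hperm : ∀ σ : Equiv.Perm α, ∑ x, e x (σ x) ≤ 0)
    (l : List α) (hl : l.Nodup) (hne : l ≠ []) :
    pathCost e l + e (l.getLast hne) (l.head hne) ≤ 0 := by
  rw [← cycSum e l hl hne]
  have : (∑ x ∈ l.toFinset, e x (l.formPerm x)) = ∑ x, e x (l.formPerm x) := by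
    refine Finset.sum_subset (Finset.subset_univ _) ?_
    intro x _ hx
    rw [List.formPerm_apply_of_notMem (by simpa using hx), he]
  rw [this]
  exact hperm _

theorem exists_potential (e : α → α → ℝ) (he : ∀ a, e a a = 0)
    (hperm : ∀ σ : Equiv.Perm α, ∑ x, e x (σ x) ≤ 0) :
    ∃ p : α → ℝ, (∀ a, 0 ≤ p a) ∧ ∀ a b, e a b + p b ≤ p a := by
  classical
  -- all nodup lists
  set paths : List (List α) := (Finset.univ.toList (α := α)).sublists.flatMap List.permutations
    with hpaths
  have mem_paths_of_nodup : ∀ {l : List α}, l.Nodup → l ∈ paths := by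
    intro l hl
    have hsub : List.Subperm l (Finset.univ.toList (α := α)) :=
      hl.subperm (fun x _ => by simp)
    obtain ⟨s, hperm', hsl⟩ := hsub
    rw [hpaths, List.mem_flatMap]
    exact ⟨s, List.mem_sublists.mpr hsl, List.mem_permutations.mpr hperm'.symm⟩
  have nodup_of_mem_paths : ∀ {l : List α}, l ∈ paths → l.Nodup := by
    intro l hl
    rw [hpaths, List.mem_flatMap] at hl
    obtain ⟨s, hs, hls⟩ := hl
    have h1 : List.Sublist s (Finset.univ.toList (α := α)) := List.mem_sublists.mp hs
    have h2 : l.Perm s := List.mem_permutations.mp hls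
    exact h2.nodup_iff.mpr (h1.nodup (Finset.nodup_toList _))
  set P : α → Finset (List α) := fun a => (paths.filter (fun l => l.head? = some a)).toFinset
    with hP
  have hmemP : ∀ {a : α} {l : List α}, l ∈ P a ↔ (l ∈ paths ∧ l.head? = some a) := by
    intro a l
    rw [hP]
    simp [List.mem_filter]
  have hPne : ∀ a, [a] ∈ P a := by
    intro a
    exact hmemP.mpr ⟨mem_paths_of_nodup (List.nodup_singleton a), rfl⟩
  set p : α → ℝ := fun a => (P a).sup' ⟨[a], hPne a⟩ (pathCost e) with hp
  refine ⟨p, ?_, ?_⟩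
  · intro a
    have h0 : pathCost e [a] ≤ p a := Finset.le_sup' (pathCost e) (hPne a)
    exact h0
  · intro a b
    obtain ⟨L, hLP, hLval⟩ := Finset.exists_mem_eq_sup' ⟨[b], hPne b⟩ (pathCost e) (s := P b)
    obtain ⟨hLpaths, hLhead⟩ := hmemP.mp hLP
    have hLnodup : L.Nodup := nodup_of_mem_paths hLpaths
    by_cases hab : a = b
    · subst hab
      rw [he]
      linarith
    obtain ⟨T, rfl⟩ : ∃ T, L = b :: T := by
      cases L with
      | nil => simp at hLhead
      | cons c T =>
        refine ⟨T, ?_⟩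
        have h1 : some c = some b := by simpa using hLhead
        rw [Option.some_injective _ h1]
    by_cases hmem : a ∈ b :: T
    · obtain ⟨L₁, L₂, hLeq⟩ := List.append_of_mem hmem
      have hL₁ne : L₁ ≠ [] := by
        intro h
        rw [h, List.nil_append] at hLeq
        exact hab (by injection hLeq with h1 _; exact h1.symm)
      obtain ⟨T₁, rfl⟩ : ∃ T₁, L₁ = b :: T₁ := by
        cases L₁ with
        | nil => exact absurd rfl hL₁ne
        | cons c T₁ =>
          refine ⟨T₁, ?_⟩
          rw [List.cons_append] at hLeq
          injection hLeq with h1 _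
          rw [h1]
      -- L = (b :: T₁) ++ a :: L₂
      have hnodup2 : ((b :: T₁) ++ a :: L₂).Nodup := hLeq ▸ hLnodup
      have hanotin : a ∉ (b :: T₁) := by
        have := (List.nodup_append'.mp hnodup2).2.2
        intro ha
        exact this ha (by simp)
      have hsuffmem : (a :: L₂) ∈ P a := by
        refine hmemP.mpr ⟨mem_paths_of_nodup ?_, rfl⟩
        exact ((List.suffix_append (b :: T₁) (a :: L₂)).sublist).nodup hnodup2
      have hple : pathCost e (a :: L₂) ≤ p a := Finset.le_sup' _ hsuffmem
      have hsplit : pathCost e (b :: T) = pathCost e ((b :: T₁) ++ [a]) + pathCost e (a :: L₂) := by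
        rw [hLeq]; exact pathCost_split e (b :: T₁) a L₂
      have hcyc := cycle_nonpos e he hperm (a :: b :: T₁)
        (by
          refine List.nodup_cons.mpr ⟨hanotin, ?_⟩
          exact (List.nodup_append'.mp hnodup2).1)
        (List.cons_ne_nil _ _)
      rw [pathCost_cons_cons, List.getLast_cons (List.cons_ne_nil _ _)] at hcyc
      have happ : pathCost e ((b :: T₁) ++ [a])
          = pathCost e (b :: T₁) + e ((b :: T₁).getLast (List.cons_ne_nil _ _)) a :=
        pathCost_append_last e (b :: T₁) (List.cons_ne_nil _ _) a
      have hheadc : (a :: b :: T₁).head (List.cons_ne_nil _ _) = a := rfl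
      rw [hheadc] at hcyc
      have : e a b + pathCost e (b :: T) ≤ pathCost e (a :: L₂) := by
        rw [hsplit, happ]
        linarith
      have hpb : p b = pathCost e (b :: T) := hLval
      calc e a b + p b = e a b + pathCost e (b :: T) := by rw [hpb]
        _ ≤ pathCost e (a :: L₂) := this
        _ ≤ p a := hple
    · have hconsmem : (a :: b :: T) ∈ P a := by
        refine hmemP.mpr ⟨mem_paths_of_nodup (List.nodup_cons.mpr ⟨hmem, hLnodup⟩), rfl⟩
      have hle : pathCost e (a :: b :: T) ≤ p a := Finset.le_sup' (pathCost e) hconsmem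
      rw [pathCost_cons_cons] at hle
      have hpb : p b = pathCost e (b :: T) := hLval
      rw [hpb]
      exact hle

end EF1Chores

open Finset

namespace EF1Chores

section Algo

variable (n : ℕ) (I : Type) [Fintype I] [DecidableEq I]

/-- round-`r` weight of a slot assignment. -/
def W (u : Fin n → I → ℝ) (Q : ℕ) (r : ℕ) (f : I → Fin n × Fin (Q + 1)) : ℝ :=
  ∑ x, if ((f x).2 : ℕ) = r then u (f x).1 x else 0

/-- valid slot assignments: injective, and every slot in a round `≥ 1` is used. -/
def Valid (Q : ℕ) (f : I → Fin n × Fin (Q + 1)) : Prop :=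
  Function.Injective f ∧ ∀ (i : Fin n) (r : Fin (Q + 1)), (r : ℕ) ≠ 0 → ∃ x, f x = (i, r)

noncomputable def V (Q : ℕ) : Finset (I → Fin n × Fin (Q + 1)) :=
  @Finset.filter _ (Valid n I Q) (Classical.decPred _) Finset.univ

lemma mem_V_iff {Q : ℕ} {f : I → Fin n × Fin (Q + 1)} : f ∈ V n I Q ↔ Valid n I Q f := by
  unfold V
  exact (@Finset.mem_filter _ (Valid n I Q) (Classical.decPred _) Finset.univ f).trans
    ⟨fun h => h.2, fun h => ⟨Finset.mem_univ _, h⟩⟩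

variable (u : Fin n → I → ℝ)

noncomputable def Vs (Q : ℕ) : ℕ → Finset (I → Fin n × Fin (Q + 1))
  | 0 => V n I Q
  | (r + 1) => @Finset.filter _
      (fun f => ∀ g ∈ Vs Q r, W n I u Q r g ≤ W n I u Q r f) (Classical.decPred _) (Vs Q r)

lemma mem_Vs_succ_iff {Q r : ℕ} {f : I → Fin n × Fin (Q + 1)} :
    f ∈ Vs n I u Q (r + 1) ↔ f ∈ Vs n I u Q r ∧
      ∀ g ∈ Vs n I u Q r, W n I u Q r g ≤ W n I u Q r f := by
  show f ∈ @Finset.filter _ _ (Classical.decPred _) (Vs n I u Q r) ↔ _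
  exact @Finset.mem_filter _ _ (Classical.decPred _) (Vs n I u Q r) f

lemma Vs_anti {Q r k : ℕ} (h : r ≤ k) : Vs n I u Q k ⊆ Vs n I u Q r := by
  induction k with
  | zero => rw [Nat.le_zero.mp h]
  | succ k ih =>
    rcases Nat.lt_or_ge r (k + 1) with hlt | hge
    · exact fun g hg => ih (Nat.lt_succ_iff.mp hlt) (((mem_Vs_succ_iff n I u).mp hg).1)
    · have : r = k + 1 := le_antisymm h hge
      rw [this]

lemma Vs_subset_V {Q r : ℕ} : Vs n I u Q r ⊆ V n I Q :=
  Vs_anti n I u (Nat.zero_le r)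

lemma Vs_nonempty {Q : ℕ} (hV : (V n I Q).Nonempty) : ∀ r, (Vs n I u Q r).Nonempty := by
  intro r
  induction r with
  | zero => exact hV
  | succ r ih =>
    obtain ⟨g₀, hg₀, hmax⟩ := Finset.exists_max_image _ (W n I u Q r) ih
    exact ⟨g₀, mem_Vs_succ_iff n I u |>.mpr ⟨hg₀, hmax⟩⟩

lemma exists_opt {Q : ℕ} (hV : (V n I Q).Nonempty) :
    ∃ f ∈ V n I Q, ∀ r, r ≤ Q → ∀ g ∈ V n I Q,
      (∀ t, t < r → W n I u Q t g = W n I u Q t f) → W n I u Q r g ≤ W n I u Q r f := by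
  obtain ⟨f, hf⟩ := Vs_nonempty n I u hV (Q + 1)
  have hfV : f ∈ V n I Q := Vs_subset_V n I u hf
  have chain : ∀ r, r ≤ Q + 1 → ∀ g ∈ V n I Q,
      (∀ t, t < r → W n I u Q t g = W n I u Q t f) → g ∈ Vs n I u Q r := by
    intro r
    induction r with
    | zero => intro _ g hg _; exact hg
    | succ r ih =>
      intro hr g hg hWeq
      have hgr : g ∈ Vs n I u Q r :=
        ih (Nat.le_of_succ_le hr) g hg (fun t ht => hWeq t (Nat.lt_succ_of_lt ht))
      have hfr1 : f ∈ Vs n I u Q (r + 1) := Vs_anti n I u hr hf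
      have hprop := (mem_Vs_succ_iff n I u |>.mp hfr1).2
      refine mem_Vs_succ_iff n I u |>.mpr ⟨hgr, fun h hh => ?_⟩
      calc W n I u Q r h ≤ W n I u Q r f := hprop h hh
        _ = W n I u Q r g := (hWeq r (Nat.lt_succ_self r)).symm
  refine ⟨f, hfV, fun r hr g hg hWeq => ?_⟩
  have hgr : g ∈ Vs n I u Q r :=
    chain r (le_trans hr (Nat.le_succ Q)) g hg hWeq
  have hfr1 : f ∈ Vs n I u Q (r + 1) := Vs_anti n I u (Nat.succ_le_succ hr) hf
  exact (mem_Vs_succ_iff n I u |>.mp hfr1).2 g hgr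

lemma V_nonempty (hn : 0 < n) {Q : ℕ} (h1 : n * Q ≤ Fintype.card I)
    (h2 : Fintype.card I ≤ n * Q + n) : (V n I Q).Nonempty := by
  classical
  set m := Fintype.card I with hm
  set s : ℕ := m - n * Q with hs
  have hsn : s ≤ n := by omega
  have hmeq : m = n * Q + s := by omega
  -- explicit valid assignment on Fin m
  have hg : ∃ g : Fin m → Fin n × Fin (Q + 1), Function.Injective g ∧
      ∀ (i : Fin n) (r : Fin (Q + 1)), (r : ℕ) ≠ 0 → ∃ k, g k = (i, r) := by
    refine ⟨fun k => if h : (k : ℕ) < s then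
        (⟨(k : ℕ), lt_of_lt_of_le h hsn⟩, ⟨0, Nat.succ_pos _⟩)
      else
        (⟨((k : ℕ) - s) % n, Nat.mod_lt _ hn⟩,
         ⟨((k : ℕ) - s) / n + 1, by
            have hk : (k : ℕ) < m := k.isLt
            have hd : (k : ℕ) - s < n * Q := by omega
            have : ((k : ℕ) - s) / n < Q := by
              rw [Nat.div_lt_iff_lt_mul hn, Nat.mul_comm Q n]
              omega
            omega⟩), ?_, ?_⟩
    · intro k1 k2 hk
      dsimp only at hk
      by_cases hc1 : (k1 : ℕ) < s <;> by_cases hc2 : (k2 : ℕ) < s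
      · rw [dif_pos hc1, dif_pos hc2] at hk
        simp only [Prod.mk.injEq, Fin.mk.injEq] at hk
        exact Fin.ext hk.1
      · rw [dif_pos hc1, dif_neg hc2] at hk
        simp only [Prod.mk.injEq, Fin.mk.injEq] at hk
        exact absurd hk.2.symm (Nat.succ_ne_zero _)
      · rw [dif_neg hc1, dif_pos hc2] at hk
        simp only [Prod.mk.injEq, Fin.mk.injEq] at hk
        exact absurd hk.2 (Nat.succ_ne_zero _)
      · rw [dif_neg hc1, dif_neg hc2] at hk
        simp only [Prod.mk.injEq, Fin.mk.injEq] at hk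
        obtain ⟨hfst, hsnd⟩ := hk
        have h1' := Nat.div_add_mod ((k1 : ℕ) - s) n
        have h2' := Nat.div_add_mod ((k2 : ℕ) - s) n
        have hdiv : ((k1 : ℕ) - s) / n = ((k2 : ℕ) - s) / n := by omega
        have heq : n * (((k1 : ℕ) - s) / n) = n * (((k2 : ℕ) - s) / n) := by rw [hdiv]
        have hk1 : (k1 : ℕ) = (k2 : ℕ) := by omega
        exact Fin.ext hk1
    · intro i r hr
      have hrQ : (r : ℕ) ≤ Q := Nat.lt_succ_iff.mp r.isLt
      have hr1 : 1 ≤ (r : ℕ) := Nat.one_le_iff_ne_zero.mpr hr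
      have hkm : s + (((r : ℕ) - 1) * n + (i : ℕ)) < m := by
        have : ((r : ℕ) - 1) * n + (i : ℕ) < n * Q := by
          have hi : (i : ℕ) < n := i.isLt
          have h3 : ((r : ℕ) - 1) * n + (i : ℕ) < ((r : ℕ) - 1) * n + n := by omega
          have h4 : ((r : ℕ) - 1) * n + n = (r : ℕ) * n := by
            have : ((r : ℕ) - 1) + 1 = (r : ℕ) := by omega
            calc ((r : ℕ) - 1) * n + n = (((r : ℕ) - 1) + 1) * n := by ring
              _ = (r : ℕ) * n := by rw [this]
          have h5 : (r : ℕ) * n ≤ Q * n := Nat.mul_le_mul_right n hrQ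
          calc ((r : ℕ) - 1) * n + (i : ℕ) < (r : ℕ) * n := by omega
            _ ≤ Q * n := h5
            _ = n * Q := Nat.mul_comm _ _
        omega
      refine ⟨⟨s + (((r : ℕ) - 1) * n + (i : ℕ)), hkm⟩, ?_⟩
      have hge : ¬ ((s + (((r : ℕ) - 1) * n + (i : ℕ))) < s) := by omega
      dsimp only
      rw [dif_neg hge]
      have hd : s + (((r : ℕ) - 1) * n + (i : ℕ)) - s = ((r : ℕ) - 1) * n + (i : ℕ) := by omega
      have hmod : (((r : ℕ) - 1) * n + (i : ℕ)) % n = (i : ℕ) := by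
        rw [Nat.mul_comm]
        exact (Nat.mul_add_mod _ _ _).trans (Nat.mod_eq_of_lt i.isLt)
      have hdiveq : (((r : ℕ) - 1) * n + (i : ℕ)) / n = (r : ℕ) - 1 := by
        rw [Nat.mul_comm ((r : ℕ) - 1) n, Nat.mul_add_div hn, Nat.div_eq_of_lt i.isLt]
        omega
      refine Prod.ext ?_ ?_
      · apply Fin.ext
        show (s + (((r : ℕ) - 1) * n + (i : ℕ)) - s) % n = (i : ℕ)
        rw [hd, hmod]
      · apply Fin.ext
        show (s + (((r : ℕ) - 1) * n + (i : ℕ)) - s) / n + 1 = (r : ℕ)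
        rw [hd, hdiveq]
        omega
  obtain ⟨g, hginj, hgfull⟩ := hg
  set e0 : I ≃ Fin m := Fintype.equivFin I with he0
  refine ⟨g ∘ e0, (mem_V_iff n I).mpr ⟨hginj.comp e0.injective, ?_⟩⟩
  intro i r hr
  obtain ⟨k, hk⟩ := hgfull i r hr
  exact ⟨e0.symm k, by simp [hk]⟩

end Algo

end EF1Chores

open Finset

namespace EF1Chores2

theorem main
    (n : ℕ) (hn : 0 < n) (I : Type) [Fintype I] [DecidableEq I]
    (u : Fin n → I → ℝ)
    (hchores : ∀ (i : Fin n) (t : I), u i t < 0) :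
    ∃ A : Fin n → Finset I,
      (∀ i j, i ≠ j → Disjoint (A i) (A j)) ∧
      (Finset.univ.biUnion A = Finset.univ) ∧
      (∀ i j : Fin n,
        (∑ t ∈ A i, u i t) ≥ (∑ t ∈ A j, u i t) ∨
          ∃ t ∈ A i ∪ A j,
            (∑ s ∈ (A i).erase t, u i s) ≥ ∑ s ∈ (A j).erase t, u i s) ∧
      (∃ p : Fin n → ℝ, (∀ i, 0 ≤ p i) ∧
        ∀ i j : Fin n, (∑ t ∈ A i, u i t) + p i ≥ (∑ t ∈ A j, u i t) + p j) := by
  classical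
  set m := Fintype.card I with hm
  set Q := m / n with hQdef
  have hdm : n * Q + m % n = m := by rw [hQdef]; exact Nat.div_add_mod m n
  have hmod := Nat.mod_lt m hn
  have h1 : n * Q ≤ m := by omega
  have h2 : m ≤ n * Q + n := by omega
  obtain ⟨f, hfV, hopt⟩ := EF1Chores.exists_opt n I u (EF1Chores.V_nonempty n I hn h1 h2)
  obtain ⟨hinj, hfull⟩ := (EF1Chores.mem_V_iff n I).mp hfV
  set A : Fin n → Finset I := fun i => univ.filter (fun x => (f x).1 = i) with hA
  have mem_A : ∀ {i : Fin n} {x : I}, x ∈ A i ↔ (f x).1 = i := by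
    intro i x
    simp [hA]
  -- ===== shift optimality =====
  have shift : ∀ x y : I, ((f x).2 : ℕ) < ((f y).2 : ℕ) → u (f x).1 y ≤ u (f x).1 x := by
    intro x y hlt
    by_contra hcon
    push_neg at hcon
    have hxy : x ≠ y := by
      intro h; rw [h] at hlt; exact lt_irrefl _ hlt
    set g : I → Fin n × Fin (Q + 1) := f ∘ (Equiv.swap x y) with hg
    have hgx : g x = f y := by simp [hg]
    have hgy : g y = f x := by simp [hg]
    have hgz : ∀ z, z ≠ x → z ≠ y → g z = f z := by
      intro z hzx hzy
      simp [hg, Equiv.swap_apply_of_ne_of_ne hzx hzy]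
    have hgV : g ∈ EF1Chores.V n I Q := by
      refine (EF1Chores.mem_V_iff n I).mpr ⟨hinj.comp (Equiv.swap x y).injective, ?_⟩
      intro i' r' hr'
      obtain ⟨z, hz⟩ := hfull i' r' hr'
      exact ⟨(Equiv.swap x y) z, by simp [hg, hz]⟩
    have hWlt : ∀ t, t < ((f x).2 : ℕ) → EF1Chores.W n I u Q t g = EF1Chores.W n I u Q t f := by
      intro t ht
      unfold EF1Chores.W
      apply Finset.sum_congr rfl
      intro z _
      by_cases hzx : z = x
      · subst hzx
        rw [hgx, if_neg (by omega : ¬ (((f y).2 : ℕ) = t)),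
          if_neg (by omega : ¬ (((f z).2 : ℕ) = t))]
      · by_cases hzy : z = y
        · subst hzy
          rw [hgy, if_neg (by omega : ¬ (((f x).2 : ℕ) = t)),
            if_neg (by omega : ¬ (((f z).2 : ℕ) = t))]
        · rw [hgz z hzx hzy]
    have hsplit : ∀ (T : I → ℝ), (∑ z, T z)
        = T x + (T y + ∑ z ∈ (univ.erase x).erase y, T z) := by
      intro T
      rw [Finset.add_sum_erase _ T (Finset.mem_erase.mpr ⟨(Ne.symm hxy), Finset.mem_univ y⟩),
        Finset.add_sum_erase _ T (Finset.mem_univ x)]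
    have hkey : EF1Chores.W n I u Q ((f x).2 : ℕ) g
        = EF1Chores.W n I u Q ((f x).2 : ℕ) f + (u (f x).1 y - u (f x).1 x) := by
      unfold EF1Chores.W
      rw [hsplit (fun z => if ((g z).2 : ℕ) = ((f x).2 : ℕ) then u (g z).1 z else 0),
        hsplit (fun z => if ((f z).2 : ℕ) = ((f x).2 : ℕ) then u (f z).1 z else 0)]
      have hrest : ∑ z ∈ (univ.erase x).erase y,
            (if ((g z).2 : ℕ) = ((f x).2 : ℕ) then u (g z).1 z else 0)
          = ∑ z ∈ (univ.erase x).erase y,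
            (if ((f z).2 : ℕ) = ((f x).2 : ℕ) then u (f z).1 z else 0) := by
        apply Finset.sum_congr rfl
        intro z hz
        rw [hgz z (Finset.mem_erase.mp (Finset.mem_of_mem_erase hz)).1
          (Finset.ne_of_mem_erase hz)]
      rw [hrest, hgx, hgy]
      rw [if_neg (by omega : ¬ (((f y).2 : ℕ) = ((f x).2 : ℕ))), if_pos rfl, if_pos rfl,
        if_neg (by omega : ¬ (((f y).2 : ℕ) = ((f x).2 : ℕ)))]
      ring
    have hle := hopt ((f x).2 : ℕ) (Nat.lt_succ_iff.mp (f x).2.isLt) g hgV hWlt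
    rw [hkey] at hle
    linarith
  -- ===== per-round permutation optimality =====
  have permsum : ∀ (τ : Equiv.Perm (Fin n)) (r : ℕ), r ≤ Q →
      (∑ x, if ((f x).2 : ℕ) = r then u (τ (f x).1) x else 0) ≤ EF1Chores.W n I u Q r f := by
    intro τ r hr
    set g : I → Fin n × Fin (Q + 1) :=
      fun z => (if ((f z).2 : ℕ) = r then τ (f z).1 else (f z).1, (f z).2) with hg
    have hg1 : ∀ z, (g z).1 = if ((f z).2 : ℕ) = r then τ (f z).1 else (f z).1 := fun z => rfl
    have hg2 : ∀ z, (g z).2 = (f z).2 := fun z => rfl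
    have hgV : g ∈ EF1Chores.V n I Q := by
      refine (EF1Chores.mem_V_iff n I).mpr ⟨?_, ?_⟩
      · intro a b hab
        have h2 : (f a).2 = (f b).2 := by
          have := congrArg Prod.snd hab
          rw [hg2, hg2] at this
          exact this
        have h1' := congrArg Prod.fst hab
        rw [hg1, hg1] at h1'
        apply hinj
        by_cases hc : ((f a).2 : ℕ) = r
        · have hc' : ((f b).2 : ℕ) = r := by rw [← h2]; exact hc
          rw [if_pos hc, if_pos hc'] at h1'
          exact Prod.ext (τ.injective h1') h2
        · have hc' : ¬ ((f b).2 : ℕ) = r := by rw [← h2]; exact hc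
          rw [if_neg hc, if_neg hc'] at h1'
          exact Prod.ext h1' h2
      · intro i' r' hr'
        by_cases hc : ((r' : Fin (Q + 1)) : ℕ) = r
        · obtain ⟨z, hz⟩ := hfull (τ.symm i') r' hr'
          have hz1 : (f z).1 = τ.symm i' := by rw [hz]
          have hz2 : (f z).2 = r' := by rw [hz]
          refine ⟨z, Prod.ext ?_ (by rw [hg2, hz2])⟩
          rw [hg1, if_pos (by rw [hz2]; exact hc), hz1]
          exact τ.apply_symm_apply i'
        · obtain ⟨z, hz⟩ := hfull i' r' hr'
          have hz1 : (f z).1 = i' := by rw [hz]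
          have hz2 : (f z).2 = r' := by rw [hz]
          refine ⟨z, Prod.ext ?_ (by rw [hg2, hz2])⟩
          rw [hg1, if_neg (by rw [hz2]; exact hc), hz1]
    have hWne : ∀ t, t < r → EF1Chores.W n I u Q t g = EF1Chores.W n I u Q t f := by
      intro t ht
      unfold EF1Chores.W
      apply Finset.sum_congr rfl
      intro z _
      rw [hg2]
      by_cases hc : ((f z).2 : ℕ) = t
      · rw [if_pos hc, if_pos hc, hg1, if_neg (by omega)]
      · rw [if_neg hc, if_neg hc]
    have hle := hopt r hr g hgV hWne
    have hWr : EF1Chores.W n I u Q r g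
        = ∑ x, if ((f x).2 : ℕ) = r then u (τ (f x).1) x else 0 := by
      unfold EF1Chores.W
      apply Finset.sum_congr rfl
      intro z _
      rw [hg2]
      by_cases hc : ((f z).2 : ℕ) = r
      · rw [if_pos hc, if_pos hc, hg1, if_pos hc]
      · rw [if_neg hc, if_neg hc]
    rw [hWr] at hle
    exact hle
  -- ===== fiberwise sums =====
  have fiber : ∀ (key : I → Fin n) (w : I → ℝ),
      (∑ i, ∑ x ∈ univ.filter (fun x => key x = i), w x) = ∑ x, w x := by
    intro key w
    exact Finset.sum_fiberwise_of_maps_to (fun x _ => Finset.mem_univ _) w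
  have roundsplit : ∀ (w : I → ℝ),
      (∑ x, w x) = ∑ r ∈ Finset.range (Q + 1), ∑ x, if ((f x).2 : ℕ) = r then w x else 0 := by
    intro w
    rw [Finset.sum_comm]
    apply Finset.sum_congr rfl
    intro x _
    rw [Finset.sum_ite_eq (Finset.range (Q + 1)) (((f x).2 : ℕ)) (fun _ => w x),
      if_pos (Finset.mem_range.mpr (f x).2.isLt)]
  -- ===== permutation welfare bound =====
  have Hperm : ∀ σ : Equiv.Perm (Fin n),
      (∑ i, ∑ x ∈ A (σ i), u i x) ≤ ∑ i, ∑ x ∈ A i, u i x := by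
    intro σ
    have hL : (∑ i, ∑ x ∈ A (σ i), u i x) = ∑ x, u (σ.symm (f x).1) x := by
      have h1 : ∀ i : Fin n, ∑ x ∈ A (σ i), u i x
          = ∑ x ∈ univ.filter (fun x => σ.symm (f x).1 = i), u (σ.symm (f x).1) x := by
        intro i
        have hfilter : A (σ i) = univ.filter (fun x => σ.symm (f x).1 = i) := by
          apply Finset.ext
          intro x
          rw [mem_A, Finset.mem_filter]
          constructor
          · intro h
            exact ⟨Finset.mem_univ _, by rw [h]; exact σ.symm_apply_apply i⟩
          · intro h
            rw [← h.2]
            exact (σ.apply_symm_apply (f x).1).symm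
        rw [hfilter]
        apply Finset.sum_congr rfl
        intro x hx
        rw [(Finset.mem_filter.mp hx).2]
      rw [Finset.sum_congr rfl (fun i _ => h1 i)]
      exact fiber _ _
    have hR : (∑ i, ∑ x ∈ A i, u i x) = ∑ x, u ((f x).1) x := by
      have h1 : ∀ i : Fin n, ∑ x ∈ A i, u i x
          = ∑ x ∈ univ.filter (fun x => (f x).1 = i), u ((f x).1) x := by
        intro i
        apply Finset.sum_congr rfl
        intro x hx
        rw [(Finset.mem_filter.mp hx).2]
      rw [Finset.sum_congr rfl (fun i _ => h1 i)]
      exact fiber _ _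
    rw [hL, hR, roundsplit (fun x => u (σ.symm (f x).1) x), roundsplit (fun x => u ((f x).1) x)]
    apply Finset.sum_le_sum
    intro r hr
    exact permsum σ.symm r (Nat.lt_succ_iff.mp (Finset.mem_range.mp hr))
  -- ===== EF1 =====
  have hEF1 : ∀ i j : Fin n,
      (∑ t ∈ A i, u i t) ≥ (∑ t ∈ A j, u i t) ∨
        ∃ t ∈ A i ∪ A j,
          (∑ s ∈ (A i).erase t, u i s) ≥ ∑ s ∈ (A j).erase t, u i s := by
    intro i j
    by_cases hij : i = j
    · left; rw [hij]
    rcases Finset.eq_empty_or_nonempty (A i) with hAe | hAne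
    · left
      rw [hAe, Finset.sum_empty]
      exact Finset.sum_nonpos (fun x _ => le_of_lt (hchores i x))
    · right
      have hx0 : ∃ x0, f x0 = (i, (⟨Q, Nat.lt_succ_self Q⟩ : Fin (Q + 1))) := by
        by_cases hQ0 : Q = 0
        · obtain ⟨x, hx⟩ := hAne
          have hx1 : (f x).1 = i := mem_A.mp hx
          have hx2 : ((f x).2 : ℕ) = Q := by
            have h := (f x).2.isLt
            omega
          exact ⟨x, Prod.ext hx1 (Fin.ext hx2)⟩
        · exact hfull i ⟨Q, Nat.lt_succ_self Q⟩ (by simpa using hQ0)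
      obtain ⟨x0, hx0⟩ := hx0
      have hx0A : x0 ∈ A i := mem_A.mpr (by rw [hx0])
      refine ⟨x0, Finset.mem_union_left _ hx0A, ?_⟩
      have hx0notAj : x0 ∉ A j := by
        intro hmem
        exact hij ((mem_A.mp hx0A).symm.trans (mem_A.mp hmem))
      rw [Finset.erase_eq_of_notMem hx0notAj]
      set D := (A i).erase x0 with hD
      have hDround : ∀ x ∈ D, ((f x).2 : ℕ) < Q := by
        intro x hx
        have hxi : (f x).1 = i := mem_A.mp (Finset.mem_of_mem_erase hx)
        have hxne : x ≠ x0 := Finset.ne_of_mem_erase hx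
        have hle : ((f x).2 : ℕ) ≤ Q := Nat.lt_succ_iff.mp (f x).2.isLt
        rcases Nat.lt_or_ge ((f x).2 : ℕ) Q with h | h
        · exact h
        · exfalso
          have heq : ((f x).2 : ℕ) = Q := le_antisymm hle h
          have : f x = (i, (⟨Q, Nat.lt_succ_self Q⟩ : Fin (Q + 1))) :=
            Prod.ext hxi (Fin.ext heq)
          exact hxne (hinj (this.trans hx0.symm))
      have hYex : ∀ r : ℕ, r < Q → ∃ y, (f y).1 = j ∧ ((f y).2 : ℕ) = r + 1 := by
        intro r hrQ
        obtain ⟨y, hy⟩ := hfull j ⟨r + 1, Nat.succ_lt_succ hrQ⟩ (by simp)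
        exact ⟨y, by rw [hy], by rw [hy]⟩
      set Y : ℕ → I := fun r => if h : r < Q then Classical.choose (hYex r h) else x0 with hY
      have hYspec : ∀ (r : ℕ) (h : r < Q),
          (f (Y r)).1 = j ∧ ((f (Y r)).2 : ℕ) = r + 1 := by
        intro r h
        rw [hY]
        dsimp only
        rw [dif_pos h]
        exact Classical.choose_spec (hYex r h)
      have hpoint : ∀ x ∈ D, u i (Y ((f x).2 : ℕ)) ≤ u i x := by
        intro x hx
        have hxi : (f x).1 = i := mem_A.mp (Finset.mem_of_mem_erase hx)
        have hr := hDround x hx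
        have hfY := (hYspec _ hr).2
        have hlt : ((f x).2 : ℕ) < ((f (Y ((f x).2 : ℕ))).2 : ℕ) := by
          rw [hfY]
          omega
        have hsh := shift x (Y ((f x).2 : ℕ)) hlt
        rw [hxi] at hsh
        exact hsh
      have hinjD : ∀ x1 ∈ D, ∀ x2 ∈ D,
          Y ((f x1).2 : ℕ) = Y ((f x2).2 : ℕ) → x1 = x2 := by
        intro x1 hx1 x2 hx2 heq
        have hr1 := hDround x1 hx1
        have hr2 := hDround x2 hx2
        have h1' := (hYspec _ hr1).2
        have h2' := (hYspec _ hr2).2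
        rw [heq] at h1'
        have hvals : ((f x1).2 : ℕ) + 1 = ((f x2).2 : ℕ) + 1 := h1'.symm.trans h2'
        have hsame : (f x1).2 = (f x2).2 := Fin.ext (by omega)
        have hxi1 : (f x1).1 = i := mem_A.mp (Finset.mem_of_mem_erase hx1)
        have hxi2 : (f x2).1 = i := mem_A.mp (Finset.mem_of_mem_erase hx2)
        exact hinj (Prod.ext (hxi1.trans hxi2.symm) hsame)
      have himg : Finset.image (fun x => Y ((f x).2 : ℕ)) D ⊆ A j := by
        intro y hy
        obtain ⟨x, hx, rfl⟩ := Finset.mem_image.mp hy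
        exact mem_A.mpr (hYspec _ (hDround x hx)).1
      have step1 : ∑ x ∈ D, u i (Y ((f x).2 : ℕ)) ≤ ∑ x ∈ D, u i x :=
        Finset.sum_le_sum hpoint
      have step2 : ∑ x ∈ D, u i (Y ((f x).2 : ℕ))
          = ∑ y ∈ D.image (fun x => Y ((f x).2 : ℕ)), u i y :=
        (Finset.sum_image hinjD).symm
      have step3 : ∑ y ∈ A j, u i y ≤ ∑ y ∈ D.image (fun x => Y ((f x).2 : ℕ)), u i y := by
        have hsd := Finset.sum_sdiff (f := u i) himg
        have hnp : ∑ y ∈ A j \ D.image (fun x => Y ((f x).2 : ℕ)), u i y ≤ 0 :=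
          Finset.sum_nonpos (fun y _ => le_of_lt (hchores i y))
        linarith
      calc ∑ s ∈ D, u i s ≥ ∑ x ∈ D, u i (Y ((f x).2 : ℕ)) := step1
        _ = ∑ y ∈ D.image (fun x => Y ((f x).2 : ℕ)), u i y := step2
        _ ≥ ∑ y ∈ A j, u i y := step3
  -- ===== payments =====
  set eenv : Fin n → Fin n → ℝ :=
    fun i j => (∑ x ∈ A j, u i x) - (∑ x ∈ A i, u i x) with heenv
  have he0 : ∀ i, eenv i i = 0 := fun i => sub_self _
  have hcyc : ∀ σ : Equiv.Perm (Fin n), ∑ i, eenv i (σ i) ≤ 0 := by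
    intro σ
    have h := Hperm σ
    have : ∑ i, eenv i (σ i)
        = (∑ i, ∑ x ∈ A (σ i), u i x) - ∑ i, ∑ x ∈ A i, u i x := by
      rw [← Finset.sum_sub_distrib]
    rw [this]
    linarith
  obtain ⟨p, hp0, hpkey⟩ := EF1Chores.exists_potential eenv he0 hcyc
  refine ⟨A, ?_, ?_, hEF1, ⟨p, hp0, ?_⟩⟩
  · intro i j hij
    rw [Finset.disjoint_left]
    intro x hxi hxj
    exact hij ((mem_A.mp hxi).symm.trans (mem_A.mp hxj))
  · apply Finset.eq_univ_iff_forall.mpr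
    intro x
    exact Finset.mem_biUnion.mpr ⟨(f x).1, Finset.mem_univ _, mem_A.mpr rfl⟩
  · intro i j
    have h := hpkey i j
    have heq : eenv i j = (∑ x ∈ A j, u i x) - (∑ x ∈ A i, u i x) := rfl
    rw [heq] at h
    linarith

end EF1Chores2

/-- With only indivisible chores (every agent values every item strictly
negatively), an allocation that is simultaneously EF1 and envy-freeable always exists. -/
theorem ef1_and_envy_freeable_exists_chores
    (n : ℕ) (hn : 0 < n) (I : Type) [Fintype I] [DecidableEq I]
    (u : Fin n → I → ℝ)
    (hchores : ∀ (i : Fin n) (t : I), u i t < 0) :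
    ∃ A : Fin n → Finset I,
      -- (A_1, …, A_n) is a partition of the items
      (∀ i j, i ≠ j → Disjoint (A i) (A j)) ∧
      (Finset.univ.biUnion A = Finset.univ) ∧
      -- EF1
      (∀ i j : Fin n,
        (∑ t ∈ A i, u i t) ≥ (∑ t ∈ A j, u i t) ∨
          ∃ t ∈ A i ∪ A j,
            (∑ s ∈ (A i).erase t, u i s) ≥ ∑ s ∈ (A j).erase t, u i s) ∧
      -- envy-freeable
      (∃ p : Fin n → ℝ, (∀ i, 0 ≤ p i) ∧
        ∀ i j : Fin n, (∑ t ∈ A i, u i t) + p i ≥ (∑ t ∈ A j, u i t) + p j) := by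
  exact EF1Chores2.main n hn I u hchores
end

section
/- An allocation A = (A_1,…,A_n) of indivisible items among agents with additive utilities is envy-freeable if and only if its envy graph has no directed cycle of strictly positive total weight. -/
lemma exists_potential (n : ℕ) (w : Fin n → Fin n → ℝ) (hw : ∀ i, w i i = 0)
    (H : ∀ (k : ℕ) (c : Fin (k + 2) → Fin n), Function.Injective c →
      ∑ t : Fin (k + 2), w (c t) (c (t + 1)) ≤ 0) :
    ∃ p : Fin n → ℝ, (∀ i, 0 ≤ p i) ∧ ∀ i j, w i j + p j ≤ p i := by
  rcases Nat.eq_zero_or_pos n with hn | hn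
  · subst hn; exact ⟨fun i => 0, fun i => i.elim0, fun i => i.elim0⟩
  set PW : ℕ → (ℕ → Fin n) → ℝ := fun k c => ∑ t ∈ Finset.range k, w (c t) (c (t+1)) with hPW
  set V : Fin n → Set ℝ := fun i =>
    {x | ∃ (k : ℕ) (c : ℕ → Fin n), Set.InjOn c (Set.Iic k) ∧ c 0 = i ∧ x = PW k c} with hV
  have hmem0 : ∀ i, (0:ℝ) ∈ V i := by
    intro i
    exact ⟨0, fun _ => i, by simp [Set.InjOn], rfl, by simp [hPW]⟩
  have hVfin : ∀ i, (V i).Finite := by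
    intro i
    apply Set.Finite.subset (Set.finite_range (fun kg : Fin n × (Fin n → Fin n) =>
        ∑ t ∈ Finset.range kg.1.val,
          w (kg.2 ⟨t % n, Nat.mod_lt t hn⟩) (kg.2 ⟨(t+1) % n, Nat.mod_lt _ hn⟩)))
    rintro x ⟨k, c, hinj, hc0, rfl⟩
    have hkn : k + 1 ≤ n := by
      have hinj2 : Function.Injective (fun t : Fin (k+1) => c t.val) := by
        intro a b hab
        exact Fin.ext (hinj (Nat.lt_succ_iff.mp a.isLt) (Nat.lt_succ_iff.mp b.isLt) hab)
      simpa using Fintype.card_le_of_injective _ hinj2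
    refine ⟨(⟨k, by omega⟩, fun s => c s.val), ?_⟩
    apply Finset.sum_congr rfl
    intro t ht
    simp only [Finset.mem_range] at ht
    have h1 : t % n = t := Nat.mod_eq_of_lt (by omega)
    have h2 : (t+1) % n = t+1 := Nat.mod_eq_of_lt (by omega)
    simp [h1, h2]
  have hple : ∀ i, ∀ x ∈ V i, x ≤ sSup (V i) := fun i x hx => le_csSup (hVfin i).bddAbove hx
  refine ⟨fun i => sSup (V i), fun i => hple i 0 (hmem0 i), ?_⟩
  intro i j
  obtain ⟨k, c, hinj, hc0, hx⟩ := Set.Nonempty.csSup_mem ⟨0, hmem0 j⟩ (hVfin j)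
  by_cases hij : i = j
  · subst hij; simp [hw]
  by_cases hi : ∃ s ≤ k, c s = i
  · -- i lies on the maximal path from j: cut out a cycle
    obtain ⟨s, hsk, hcs⟩ := hi
    have hs0 : s ≠ 0 := fun h => hij (by rw [← hcs, h, hc0])
    obtain ⟨s', rfl⟩ : ∃ s', s = s' + 1 := ⟨s - 1, by omega⟩
    have hcyc : (∑ t ∈ Finset.range (s'+1), w (c t) (c (t+1))) + w (c (s'+1)) (c 0) ≤ 0 := by
      have hinj' : Function.Injective (fun t : Fin (s'+2) => c t.val) := by
        intro a b hab
        exact Fin.ext (hinj (by omega : a.val ≤ k) (by omega : b.val ≤ k) hab)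
      have := H s' (fun t => c t.val) hinj'
      rw [Fin.sum_univ_castSucc] at this
      have hlast : ((Fin.last (s'+1) + 1 : Fin (s'+2))).val = 0 := by
        simp [Fin.add_def]
      have hcs' : ∀ t : Fin (s'+1), ((t.castSucc + 1 : Fin (s'+2))).val = t.val + 1 := by
        intro t
        simp [Fin.add_def, Nat.mod_eq_of_lt (by omega : t.val + 1 < s' + 2)]
      calc (∑ t ∈ Finset.range (s'+1), w (c t) (c (t+1))) + w (c (s'+1)) (c 0)
          = (∑ t : Fin (s'+1), w (c t.val) (c (t.val+1))) + w (c (s'+1)) (c 0) := by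
            rw [Fin.sum_univ_eq_sum_range (fun t => w (c t) (c (t+1))) (s'+1)]
        _ = (∑ t : Fin (s'+1), w (c (t.castSucc : Fin (s'+2)).val)
              (c ((t.castSucc + 1 : Fin (s'+2))).val))
            + w (c (Fin.last (s'+1)).val) (c ((Fin.last (s'+1) + 1 : Fin (s'+2))).val) := by
            rw [hlast]
            simp only [Fin.val_last, Fin.coe_castSucc]
            congr 1
            exact Finset.sum_congr rfl (fun t _ => by rw [hcs' t])
        _ ≤ 0 := this
    -- the suffix path from i
    set Y : ℝ := ∑ t ∈ Finset.Ico (s'+1) k, w (c t) (c (t+1)) with hY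
    have hYmem : Y ∈ V i := by
      refine ⟨k - (s'+1), fun t => c (s'+1+t), ?_, by simpa using hcs, ?_⟩
      · intro a ha b hb hab
        simp only [Set.mem_Iic] at ha hb
        have := hinj (by omega : s'+1+a ≤ k) (by omega : s'+1+b ≤ k) hab
        omega
      · rw [hY, Finset.sum_Ico_eq_sum_range]
        rfl
    have hsplit : PW k c = (∑ t ∈ Finset.range (s'+1), w (c t) (c (t+1))) + Y := by
      rw [hPW, hY]
      exact (Finset.sum_range_add_sum_Ico _ hsk).symm
    have hwij : w (c (s'+1)) (c 0) = w i j := by rw [hcs, hc0]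
    rw [hwij] at hcyc
    have h2 := hple i Y hYmem
    simp only []
    rw [hx, hsplit]
    linarith
  · -- i is not on the path: extend the path by the edge (i, j)
    push_neg at hi
    set c' : ℕ → Fin n := fun t => if t = 0 then i else c (t-1) with hc'
    have hmem : PW (k+1) c' ∈ V i := by
      refine ⟨k+1, c', ?_, by simp [hc'], rfl⟩
      intro a ha b hb hab
      simp only [Set.mem_Iic] at ha hb
      rcases Nat.eq_zero_or_pos a with ha0 | ha0 <;> rcases Nat.eq_zero_or_pos b with hb0 | hb0
      · omega
      · exfalso; subst ha0
        simp only [hc', if_pos rfl, if_neg (by omega : b ≠ 0)] at hab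
        exact hi (b-1) (by omega) hab.symm
      · exfalso; subst hb0
        simp only [hc', if_pos rfl, if_neg (by omega : a ≠ 0)] at hab
        exact hi (a-1) (by omega) hab
      · simp only [hc', if_neg (by omega : a ≠ 0), if_neg (by omega : b ≠ 0)] at hab
        have := hinj (by omega : a - 1 ≤ k) (by omega : b - 1 ≤ k) hab
        omega
    have hval : PW (k+1) c' = w i j + PW k c := by
      rw [hPW]
      simp only
      have hterm : ∀ t ∈ Finset.range k, w (c' (t+1)) (c' (t+1+1)) = w (c t) (c (t+1)) := by
        intro t ht; simp [hc']
      rw [Finset.sum_range_succ' (fun t => w (c' t) (c' (t+1))) k, Finset.sum_congr rfl hterm]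
      simp [hc', hc0, add_comm]
    have := hple i _ hmem
    rw [hval, ← hx] at this
    exact this

/-- An allocation is envy-freeable iff its envy graph (edge `(i, j)` has weight
`u_i(A_j) − u_i(A_i)`) has no directed cycle of strictly positive total weight. A directed
cycle of length `k + 2 ≥ 2` is given by an injective map `c : Fin (k + 2) → Fin n`, visiting
`c 0, c 1, …` and returning to `c 0`. -/
theorem envy_freeable_iff_no_positive_cycle
    (n : ℕ) (I : Type) [Fintype I] [DecidableEq I]
    (u : Fin n → I → ℝ)
    (A : Fin n → Finset I)
    (hA_disj : ∀ i j, i ≠ j → Disjoint (A i) (A j))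
    (hA_cover : Finset.univ.biUnion A = Finset.univ) :
    (∃ p : Fin n → ℝ, (∀ i, 0 ≤ p i) ∧
        ∀ i j : Fin n, (∑ t ∈ A i, u i t) + p i ≥ (∑ t ∈ A j, u i t) + p j) ↔
      (∀ (k : ℕ), ∀ c : Fin (k + 2) → Fin n, Function.Injective c →
        (∑ t : Fin (k + 2),
          ((∑ s ∈ A (c (t + 1)), u (c t) s) - (∑ s ∈ A (c t), u (c t) s))) ≤ 0) := by
  constructor
  · rintro ⟨p, hp0, hp⟩ k c hc
    have h1 : ∀ t : Fin (k+2),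
        (∑ s ∈ A (c (t + 1)), u (c t) s) - (∑ s ∈ A (c t), u (c t) s)
          ≤ p (c t) - p (c (t+1)) := by
      intro t
      have := hp (c t) (c (t+1))
      linarith
    calc (∑ t : Fin (k + 2),
          ((∑ s ∈ A (c (t + 1)), u (c t) s) - (∑ s ∈ A (c t), u (c t) s)))
        ≤ ∑ t : Fin (k+2), (p (c t) - p (c (t+1))) :=
          Finset.sum_le_sum (fun t _ => h1 t)
      _ = 0 := by
          rw [Finset.sum_sub_distrib, sub_eq_zero]
          exact (Equiv.sum_comp (Equiv.addRight (1 : Fin (k+2))) (fun t => p (c t))).symm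
  · intro H
    obtain ⟨p, hp0, hp⟩ := exists_potential n
      (fun i j => (∑ s ∈ A j, u i s) - (∑ s ∈ A i, u i s))
      (fun i => sub_self _) H
    refine ⟨p, hp0, fun i j => ?_⟩
    have := hp i j
    linarith
end

section
/- An allocation A = (A_1,…,A_n) of indivisible items among agents with additive utilities is envy-freeable if and only if it maximizes utilitarian social welfare across all reassignments of its bundles among the agents, i.e., for every permutation σ of N, Σ_{i=1}^n u_i(A_i) ≥ Σ_{i=1}^n u_i(A_{σ(i)}). -/
namespace EFAux

variable {n : ℕ}

/-- Weight of a walk starting at `i` and visiting the vertices of `l` in order. -/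
def wt (w : Fin n → Fin n → ℝ) : Fin n → List (Fin n) → ℝ
  | _, [] => 0
  | i, j :: l => w i j + wt w j l

lemma wt_eq_zipWith (w : Fin n → Fin n → ℝ) (i : Fin n) (l : List (Fin n)) :
    wt w i l = (List.zipWith w (i :: l) l).sum := by
  induction l generalizing i with
  | nil => simp [wt]
  | cons j l ih => simp [wt, ih j]

lemma wt_append (w : Fin n → Fin n → ℝ) (a : List (Fin n)) (i x : Fin n) (b : List (Fin n)) :
    wt w i (a ++ x :: b) = wt w i (a ++ [x]) + wt w x b := by
  induction a generalizing i with
  | nil => simp [wt]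
  | cons j a ih =>
    show wt w i (j :: (a ++ x :: b)) = wt w i (j :: (a ++ [x])) + wt w x b
    simp only [wt]
    rw [ih j]; ring

/-- Any cycle in the envy graph has nonpositive weight. -/
lemma cycle_nonpos (w : Fin n → Fin n → ℝ) (hw : ∀ i, w i i = 0)
    (hcyc : ∀ σ : Equiv.Perm (Fin n), ∑ i, w i (σ i) ≤ 0)
    (x : Fin n) (q : List (Fin n)) (hnd : (x :: q).Nodup) :
    wt w x (q ++ [x]) ≤ 0 := by
  set L : List (Fin n) := x :: q with hL
  set σ := L.formPerm with hσ
  have hlen : L.length = q.length + 1 := by simp [hL]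
  have key : wt w x (q ++ [x]) = ∑ i, w i (σ i) := by
    have h1 : wt w x (q ++ [x]) = (List.zipWith w L (L.rotate 1)).sum := by
      rw [wt_eq_zipWith]
      congr 1
      have hrot : L.rotate 1 = q ++ [x] := by simp [hL, List.rotate_cons_succ]
      rw [hrot]
      have : (x : Fin n) :: (q ++ [x]) = (x :: q) ++ [x] := by simp
      rw [this]
      have := List.zipWith_append (f := w) (l₁ := x :: q) (l₁' := [x])
        (l₂ := q ++ [x]) (l₂' := ([] : List (Fin n))) (by simp)
      simpa using this
    have h2 : List.zipWith w L (L.rotate 1) = L.map (fun a => w a (σ a)) := by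
      apply List.ext_getElem
      · simp
      · intro k h1' h2'
        have hk : k < L.length := by simpa using h2'
        simp only [List.getElem_zipWith, List.getElem_map]
        have hfp := List.formPerm_apply_getElem L hnd k hk
        simp only [hσ, hfp, List.getElem_rotate]
    have h3 : (L.map (fun a => w a (σ a))).sum = ∑ i ∈ L.toFinset, w i (σ i) := by
      rw [List.sum_toFinset _ hnd]
    have h4 : ∑ i, w i (σ i) = ∑ i ∈ L.toFinset, w i (σ i) := by
      rw [← Finset.sum_subset (Finset.subset_univ L.toFinset)]
      intro i _ hi
      have : σ i = i := List.formPerm_apply_of_notMem (by simpa using hi)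
      rw [this, hw]
    rw [h1, h2, h3, h4]
  rw [key]; exact hcyc σ

/-- The finite set of duplicate-free walks starting at `i`. -/
noncomputable def paths (i : Fin n) : Finset (List (Fin n)) :=
  (Set.Finite.subset (List.finite_length_le (Fin n) n)
    (show {l : List (Fin n) | (i :: l).Nodup} ⊆ {l : List (Fin n) | l.length ≤ n} from
      fun l hl => by
        have h2 : l.Nodup := (List.nodup_cons.mp hl).2
        simpa using h2.length_le_card)).toFinset

lemma mem_paths {i : Fin n} {l : List (Fin n)} : l ∈ paths i ↔ (i :: l).Nodup :=
  Set.Finite.mem_toFinset _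

lemma paths_nonempty (i : Fin n) : (paths i).Nonempty :=
  ⟨[], mem_paths.mpr (by simp)⟩

noncomputable def pay (w : Fin n → Fin n → ℝ) (i : Fin n) : ℝ :=
  (paths i).sup' (paths_nonempty i) (wt w i)

lemma pay_nonneg (w : Fin n → Fin n → ℝ) (i : Fin n) : 0 ≤ pay w i := by
  have h := Finset.le_sup' (wt w i) (mem_paths.mpr (show (i :: ([] : List (Fin n))).Nodup by simp))
  have h0 : wt w i [] = 0 := rfl
  rw [h0] at h
  exact h

lemma pay_ge (w : Fin n → Fin n → ℝ) (hw : ∀ i, w i i = 0)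
    (hcyc : ∀ σ : Equiv.Perm (Fin n), ∑ i, w i (σ i) ≤ 0)
    (i j : Fin n) : w i j + pay w j ≤ pay w i := by
  have hle : ∀ l ∈ paths j, wt w j l ≤ pay w i - w i j := by
    intro l hl
    have hnd : (j :: l).Nodup := mem_paths.mp hl
    by_cases hmem : i ∈ j :: l
    · obtain ⟨q, r, hqr⟩ := List.append_of_mem hmem
      have hkey : w i j + wt w j l = wt w i (j :: l) := by simp [wt]
      have hnd2 : (q ++ i :: r).Nodup := hqr ▸ hnd
      have hiq : i ∉ q := by
        have := List.disjoint_of_nodup_append hnd2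
        intro h; exact this h (by simp)
      have hqnd : q.Nodup := hnd2.of_append_left
      have hirnd : (i :: r).Nodup := hnd2.of_append_right
      have hcycle : wt w i (q ++ [i]) ≤ 0 :=
        cycle_nonpos w hw hcyc i q (List.nodup_cons.mpr ⟨hiq, hqnd⟩)
      have hsplit : wt w i (j :: l) = wt w i (q ++ [i]) + wt w i r := by
        rw [hqr]; exact wt_append w q i i r
      have hr : wt w i r ≤ pay w i :=
        Finset.le_sup' (wt w i) (mem_paths.mpr hirnd)
      have : w i j + wt w j l ≤ pay w i := by
        rw [hkey, hsplit]; linarith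
      linarith
    · have hnd2 : (i :: j :: l).Nodup := List.nodup_cons.mpr ⟨hmem, hnd⟩
      have : wt w i (j :: l) ≤ pay w i :=
        Finset.le_sup' (wt w i) (mem_paths.mpr hnd2)
      have hkey : wt w i (j :: l) = w i j + wt w j l := by simp [wt]
      linarith
  have : pay w j ≤ pay w i - w i j := Finset.sup'_le _ _ hle
  linarith

end EFAux

/-- An allocation is envy-freeable iff it maximizes utilitarian social welfare
across all reassignments (permutations) of its bundles among the agents. -/
theorem envy_freeable_iff_welfare_maximizing
    (n : ℕ) (I : Type) [Fintype I] [DecidableEq I]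
    (u : Fin n → I → ℝ)
    (A : Fin n → Finset I)
    (hA_disj : ∀ i j, i ≠ j → Disjoint (A i) (A j))
    (hA_cover : Finset.univ.biUnion A = Finset.univ) :
    (∃ p : Fin n → ℝ, (∀ i, 0 ≤ p i) ∧
        ∀ i j : Fin n, (∑ t ∈ A i, u i t) + p i ≥ (∑ t ∈ A j, u i t) + p j) ↔
      (∀ σ : Equiv.Perm (Fin n),
        (∑ i, ∑ t ∈ A i, u i t) ≥ ∑ i, ∑ t ∈ A (σ i), u i t) := by
  constructor
  · rintro ⟨p, hp0, hp⟩ σ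
    have h1 : ∀ i : Fin n, (∑ t ∈ A (σ i), u i t) + p (σ i) ≤ (∑ t ∈ A i, u i t) + p i :=
      fun i => hp i (σ i)
    have h2 : ∑ i, ((∑ t ∈ A (σ i), u i t) + p (σ i)) ≤ ∑ i, ((∑ t ∈ A i, u i t) + p i) :=
      Finset.sum_le_sum fun i _ => h1 i
    have h3 : ∑ i, p (σ i) = ∑ i, p i := Equiv.sum_comp σ p
    rw [Finset.sum_add_distrib, Finset.sum_add_distrib, h3] at h2
    linarith
  · intro H
    set w : Fin n → Fin n → ℝ :=
      fun i j => (∑ t ∈ A j, u i t) - (∑ t ∈ A i, u i t) with hwdef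
    have hw : ∀ i, w i i = 0 := fun i => by simp [hwdef]
    have hcyc : ∀ σ : Equiv.Perm (Fin n), ∑ i, w i (σ i) ≤ 0 := by
      intro σ
      have := H σ
      simp only [hwdef]
      rw [Finset.sum_sub_distrib]
      linarith
    refine ⟨EFAux.pay w, fun i => EFAux.pay_nonneg w i, fun i j => ?_⟩
    have := EFAux.pay_ge w hw hcyc i j
    simp only [hwdef] at this
    linarith
end

section
/- Let A = (A_1,…,A_n) be an EF1 allocation of the indivisible items, let each agent have cake utility u_i(C) ∈ {0,1} over the cake C = [0,1], and set N⁺ = {i : u_i(C) = 1}. If there exist payments (p_i)_{i∈N⁺} with p_i ≥ 0 and Σ_{i∈N⁺} p_i = 1 such that {(A_i, p_i)}_{i∈N⁺} is EFM with money among the agents in N⁺, then there exists a measurable partition (C_1,…,C_n) of [0,1] such that the combined allocation {(A_i, C_i)}_{i∈N} is EFM (with C_i = ∅ for i ∉ N⁺). -/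
open MeasureTheory

open Set

lemma my_abscont {G : ℝ → ℝ} (hG : IntegrableOn G (Set.Icc 0 1)) {ε : ℝ} (hε : 0 < ε) :
    ∃ δ > 0, ∀ S : Set ℝ, MeasurableSet S → S ⊆ Set.Icc 0 1 → (volume S).toReal < δ →
      |∫ x in S, G x| < ε := by
  set μ := volume.restrict (Set.Icc (0:ℝ) 1) with hμ
  have hfin : (∫⁻ x, ENNReal.ofReal ‖G x‖ ∂μ) ≠ ⊤ := by
    have := hG.2
    rw [MeasureTheory.hasFiniteIntegral_iff_norm] at this
    exact this.ne
  obtain ⟨δ', hδ'pos, hδ'⟩ := exists_pos_setLIntegral_lt_of_measure_lt (μ := μ)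
    hfin (ε := ENNReal.ofReal ε) (ENNReal.ofReal_pos.mpr hε).ne'
  refine ⟨(min δ' 1).toReal, ?_, ?_⟩
  · exact ENNReal.toReal_pos (lt_min hδ'pos one_pos).ne' (by simp)
  · intro S hSm hSsub hSlt
    have hSfin : volume S ≠ ⊤ := by
      refine ((measure_mono hSsub).trans_lt ?_).ne
      simp [Real.volume_Icc]
    have h1 : volume S < min δ' 1 := by
      rwa [ENNReal.toReal_lt_toReal hSfin (by simp)] at hSlt
    have h2 : μ S < δ' := by
      calc μ S ≤ volume S := Measure.restrict_le_self _
        _ < min δ' 1 := h1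
        _ ≤ δ' := min_le_left _ _
    have h3 : ∫⁻ x in S, ENNReal.ofReal ‖G x‖ ∂μ < ENNReal.ofReal ε := hδ' S h2
    have hrr : μ.restrict S = volume.restrict S := by
      rw [hμ, Measure.restrict_restrict hSm, Set.inter_eq_self_of_subset_left hSsub]
    calc |∫ x in S, G x| = ‖∫ x in S, G x ∂volume‖ := (Real.norm_eq_abs _).symm
      _ ≤ (∫⁻ x, ENNReal.ofReal ‖G x‖ ∂(volume.restrict S)).toReal :=
          norm_integral_le_lintegral_norm _
      _ < ε := by
          rw [← hrr]
          exact ENNReal.toReal_lt_of_lt_ofReal h3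

lemma quantile_fam (X : Set ℝ) (hXm : MeasurableSet X) (hXs : X ⊆ Set.Icc 0 1) :
    ∃ S : ℝ → Set ℝ, (∀ t, MeasurableSet (S t)) ∧ (∀ t, S t ⊆ X) ∧
      (∀ s t, s ≤ t → S s ⊆ S t) ∧
      (∀ t ∈ Set.Icc (0:ℝ) 1, (∫ x in S t, (1:ℝ)) = t * ∫ x in X, (1:ℝ)) := by
  classical
  set W : ℝ → ℝ := fun s => ∫ x in X ∩ Set.Iic s, (1:ℝ) with hWdef
  have hfinV : ∀ s : Set ℝ, s ⊆ Set.Icc 0 1 → volume s ≠ ⊤ := fun s hs =>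
    ((measure_mono hs).trans_lt (by simp [Real.volume_Icc])).ne
  have hWval : ∀ s, W s = (volume (X ∩ Set.Iic s)).toReal := by
    intro s; simp [hWdef, setIntegral_const, measureReal_def]
  have hm : (∫ x in X, (1:ℝ)) = (volume X).toReal := by simp [setIntegral_const, measureReal_def]
  set m : ℝ := ∫ x in X, (1:ℝ) with hmdef
  have hm0 : 0 ≤ m := by rw [hm]; positivity
  have hWlip : ∀ s t : ℝ, s ≤ t → W s ≤ W t ∧ W t ≤ W s + (t - s) := by
    intro s t hst
    constructor
    · rw [hWval, hWval]
      exact ENNReal.toReal_mono (hfinV _ (fun x hx => hXs hx.1))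
        (measure_mono (Set.inter_subset_inter_right _ (Set.Iic_subset_Iic.mpr hst)))
    · rw [hWval, hWval]
      have hsub : X ∩ Set.Iic t ⊆ (X ∩ Set.Iic s) ∪ Set.Ioc s t := by
        intro x hx
        rcases le_or_gt x s with h | h
        · exact Or.inl ⟨hx.1, h⟩
        · exact Or.inr ⟨h, hx.2⟩
      calc (volume (X ∩ Set.Iic t)).toReal
          ≤ (volume ((X ∩ Set.Iic s) ∪ Set.Ioc s t)).toReal := by
            refine ENNReal.toReal_mono ?_ (measure_mono hsub)
            refine (measure_union_le _ _).trans_lt ?_ |>.ne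
            rw [Real.volume_Ioc]
            exact ENNReal.add_lt_top.mpr ⟨(hfinV _ fun x hx => hXs hx.1).lt_top, ENNReal.ofReal_lt_top⟩
        _ ≤ (volume (X ∩ Set.Iic s)).toReal + (volume (Set.Ioc s t)).toReal := by
            rw [← ENNReal.toReal_add (hfinV _ fun x hx => hXs hx.1) (by simp [Real.volume_Ioc])]
            exact ENNReal.toReal_mono
              (by exact ENNReal.add_ne_top.mpr ⟨hfinV _ fun x hx => hXs hx.1, by simp [Real.volume_Ioc]⟩)
              (measure_union_le _ _)
        _ = (volume (X ∩ Set.Iic s)).toReal + (t - s) := by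
            rw [Real.volume_Ioc, ENNReal.toReal_ofReal (by linarith)]
  have hWcont : Continuous W := by
    have hL : LipschitzWith 1 W := by
      refine LipschitzWith.of_dist_le_mul fun s t => ?_
      rw [Real.dist_eq, Real.dist_eq, NNReal.coe_one, one_mul]
      rcases le_total s t with h | h
      · obtain ⟨h1, h2⟩ := hWlip s t h
        rw [abs_of_nonpos (by linarith : s - t ≤ 0), abs_le]
        constructor <;> linarith
      · obtain ⟨h1, h2⟩ := hWlip t s h
        rw [abs_of_nonneg (by linarith : 0 ≤ s - t), abs_le]
        constructor <;> linarith
    exact hL.continuous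
  have hX1 : X ∩ Set.Iic 1 = X :=
    Set.inter_eq_self_of_subset_left (fun x hx => (hXs hx).2)
  have hW1 : W 1 = m := by rw [hWval, hX1, hm]
  have hWm1 : W (-1) = 0 := by
    have : X ∩ Set.Iic (-1) = ∅ := by
      ext x; simp only [Set.mem_inter_iff, Set.mem_Iic, Set.mem_empty_iff_false, iff_false]
      rintro ⟨hx, hx2⟩; have := (hXs hx).1; linarith
    rw [hWdef]; simp [this]
  set Qset : ℝ → Set ℝ := fun t => {s | s ∈ Set.Icc (-1:ℝ) 1 ∧ t * m ≤ W s} with hQsetdef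
  have hne : ∀ t ∈ Set.Icc (0:ℝ) 1, 1 ∈ Qset t := by
    intro t ht
    refine ⟨by simp, ?_⟩
    rw [hW1]
    nlinarith [ht.2, hm0]
  have hclosed : ∀ t, IsClosed (Qset t) := by
    intro t
    have : Qset t = Set.Icc (-1:ℝ) 1 ∩ {s | t * m ≤ W s} := rfl
    rw [this]
    exact isClosed_Icc.inter (isClosed_le continuous_const hWcont)
  have hbdd : ∀ t, BddBelow (Qset t) := fun t => ⟨-1, fun s hs => hs.1.1⟩
  set Q : ℝ → ℝ := fun t => sInf (Qset t) with hQdef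
  have hQmem : ∀ t ∈ Set.Icc (0:ℝ) 1, Q t ∈ Qset t := fun t ht =>
    (hclosed t).csInf_mem ⟨1, hne t ht⟩ (hbdd t)
  have hQeq : ∀ t ∈ Set.Icc (0:ℝ) 1, W (Q t) = t * m := by
    intro t ht
    have hc0 : 0 ≤ t * m := mul_nonneg ht.1 hm0
    obtain ⟨hQr, hQge⟩ := hQmem t ht
    by_contra hne'
    have hlt : t * m < W (Q t) := lt_of_le_of_ne hQge (fun h => hne' h.symm)
    have hQne : -1 < Q t := by
      rcases eq_or_lt_of_le hQr.1 with h | h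
      · exfalso; rw [← h, hWm1] at hlt; linarith
      · exact h
    have hopen : IsOpen {s : ℝ | t * m < W s} := isOpen_lt continuous_const hWcont
    obtain ⟨η, hη, hball⟩ := Metric.isOpen_iff.mp hopen (Q t) hlt
    set s : ℝ := max (-1) (Q t - η / 2) with hsdef
    have hslt : s < Q t := by
      apply max_lt hQne; linarith
    have hsball : s ∈ Metric.ball (Q t) η := by
      rw [Metric.mem_ball, Real.dist_eq, abs_of_nonpos (by linarith)]
      have : Q t - η / 2 ≤ s := le_max_right _ _
      linarith
    have hsmem : s ∈ Qset t := by
      refine ⟨⟨le_max_left _ _, le_trans hslt.le hQr.2⟩, (hball hsball).le⟩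
    have h2 := csInf_le (hbdd t) hsmem
    have : Q t ≤ s := h2
    linarith
  have hQmono : ∀ s t, s ∈ Set.Icc (0:ℝ) 1 → t ∈ Set.Icc (0:ℝ) 1 → s ≤ t → Q s ≤ Q t := by
    intro s t hs ht hst
    refine csInf_le_csInf (hbdd s) ⟨1, hne t ht⟩ ?_
    intro x hx
    exact ⟨hx.1, le_trans (by nlinarith [hm0]) hx.2⟩
  set clamp : ℝ → ℝ := fun t => min 1 (max 0 t) with hclampdef
  have hclampmem : ∀ t, clamp t ∈ Set.Icc (0:ℝ) 1 :=
    fun t => ⟨le_min zero_le_one (le_max_left _ _), min_le_left _ _⟩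
  have hclampid : ∀ t ∈ Set.Icc (0:ℝ) 1, clamp t = t := by
    intro t ht; rw [hclampdef]; simp [max_eq_right ht.1, min_eq_right ht.2]
  refine ⟨fun t => X ∩ Set.Iic (Q (clamp t)), fun t => hXm.inter measurableSet_Iic,
    fun t => Set.inter_subset_left, ?_, ?_⟩
  · intro s t hst
    refine Set.inter_subset_inter_right _ (Set.Iic_subset_Iic.mpr ?_)
    refine hQmono _ _ (hclampmem s) (hclampmem t) ?_
    exact min_le_min le_rfl (max_le_max le_rfl hst)
  · intro t ht
    show (∫ x in X ∩ Set.Iic (Q (clamp t)), (1:ℝ)) = t * m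
    rw [hclampid t ht]
    exact hQeq t ht

noncomputable def dyadU (Hf : Set ℝ → Set ℝ) (X : Set ℝ) : ℕ → ℕ → Set ℝ
  | 0 => fun j => if j = 0 then ∅ else X
  | (n+1) => fun j =>
      if j % 2 = 0 then dyadU Hf X n (j / 2)
      else dyadU Hf X n (j / 2) ∪ Hf (dyadU Hf X n (j / 2 + 1) \ dyadU Hf X n (j / 2))

lemma fam_of_half {ι : Type*} (g : ι → ℝ → ℝ)
    (hint : ∀ i, IntegrableOn (g i) (Set.Icc 0 1))
    (half : ∀ X : Set ℝ, MeasurableSet X → X ⊆ Set.Icc 0 1 →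
      ∃ T, MeasurableSet T ∧ T ⊆ X ∧ ∀ i, (∫ x in T, g i x) = (1/2) * ∫ x in X, g i x)
    (X : Set ℝ) (hXm : MeasurableSet X) (hXs : X ⊆ Set.Icc 0 1) :
    ∃ S : ℝ → Set ℝ, (∀ t, MeasurableSet (S t)) ∧ (∀ t, S t ⊆ X) ∧
      (∀ s t, s ≤ t → S s ⊆ S t) ∧
      (∀ t ∈ Set.Icc (0:ℝ) 1, ∀ i, (∫ x in S t, g i x) = t * ∫ x in X, g i x) := by
  classical
  have hchoice : ∀ Y : Set ℝ, ∃ T : Set ℝ, MeasurableSet Y → Y ⊆ Set.Icc 0 1 →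
      (MeasurableSet T ∧ T ⊆ Y ∧ ∀ i, (∫ x in T, g i x) = (1/2) * ∫ x in Y, g i x) := by
    intro Y
    by_cases h : MeasurableSet Y ∧ Y ⊆ Set.Icc 0 1
    · obtain ⟨T, hT⟩ := half Y h.1 h.2
      exact ⟨T, fun _ _ => hT⟩
    · exact ⟨∅, fun h1 h2 => absurd ⟨h1, h2⟩ h⟩
  choose Hf hHf using hchoice
  set U : ℕ → ℕ → Set ℝ := dyadU Hf X with hUdef
  have hU0 : ∀ j, U 0 j = if j = 0 then ∅ else X := fun j => rfl
  have hUeven : ∀ n m, U (n+1) (2*m) = U n m := by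
    intro n m
    show (if (2*m) % 2 = 0 then U n ((2*m)/2)
      else U n ((2*m)/2) ∪ Hf (U n ((2*m)/2 + 1) \ U n ((2*m)/2))) = U n m
    rw [if_pos (show (2*m) % 2 = 0 by omega), show (2*m)/2 = m from by omega]
  have hUodd : ∀ n m, U (n+1) (2*m+1) = U n m ∪ Hf (U n (m+1) \ U n m) := by
    intro n m
    show (if (2*m+1) % 2 = 0 then U n ((2*m+1)/2)
      else U n ((2*m+1)/2) ∪ Hf (U n ((2*m+1)/2 + 1) \ U n ((2*m+1)/2)))
      = U n m ∪ Hf (U n (m+1) \ U n m)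
    rw [if_neg (by omega)]
    have h1 : (2*m+1)/2 = m := by omega
    rw [h1]
  -- main invariant
  have inv : ∀ n, (∀ j, MeasurableSet (U n j)) ∧ (∀ j, U n j ⊆ X) ∧
      (∀ j, U n j ⊆ U n (j+1)) ∧ (∀ j, 2^n ≤ j → U n j = X) ∧
      (∀ j, j ≤ 2^n → ∀ i, (∫ x in U n j, g i x) = ((j:ℝ)/2^n) * ∫ x in X, g i x) := by
    intro n
    induction n with
    | zero =>
      refine ⟨?_, ?_, ?_, ?_, ?_⟩
      · intro j; rw [hU0]; split <;> simp [hXm]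
      · intro j; rw [hU0]; split
        · exact Set.empty_subset _
        · exact le_rfl
      · intro j
        rcases eq_or_ne j 0 with h | h
        · rw [hU0, if_pos h]; exact Set.empty_subset _
        · rw [hU0, hU0, if_neg h, if_neg (by omega)]
      · intro j hj; rw [hU0, if_neg (by omega)]
      · intro j hj i
        interval_cases j
        · rw [hU0, if_pos rfl]; simp
        · rw [hU0, if_neg (by omega)]; simp
    | succ n ih =>
      obtain ⟨ihm, ihsub, ihmono, ihfull, ihval⟩ := ih
      -- facts about the half-set
      have hD : ∀ m, MeasurableSet (U n (m+1) \ U n m) := fun m => (ihm _).diff (ihm _)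
      have hDsub : ∀ m, (U n (m+1) \ U n m) ⊆ Set.Icc 0 1 :=
        fun m => (Set.diff_subset.trans (ihsub _)).trans hXs
      have hT := fun m => hHf (U n (m+1) \ U n m) (hD m) (hDsub m)
      have hTm : ∀ m, MeasurableSet (Hf (U n (m+1) \ U n m)) := fun m => (hT m).1
      have hTsub : ∀ m, Hf (U n (m+1) \ U n m) ⊆ U n (m+1) \ U n m := fun m => (hT m).2.1
      have hp : (2:ℕ)^(n+1) = 2 * 2^n := by ring
      refine ⟨?_, ?_, ?_, ?_, ?_⟩
      · intro j
        rcases Nat.even_or_odd j with ⟨m, hm2⟩ | ⟨m, hm2⟩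
        · subst hm2; rw [show m + m = 2*m from by omega, hUeven]; exact ihm m
        · subst hm2; rw [hUodd]; exact (ihm m).union (hTm m)
      · intro j
        rcases Nat.even_or_odd j with ⟨m, hm2⟩ | ⟨m, hm2⟩
        · subst hm2; rw [show m + m = 2*m from by omega, hUeven]; exact ihsub m
        · subst hm2; rw [hUodd]
          exact Set.union_subset (ihsub m) (((hTsub m).trans Set.diff_subset).trans (ihsub _))
      · intro j
        rcases Nat.even_or_odd j with ⟨m, hm2⟩ | ⟨m, hm2⟩
        · subst hm2
          rw [show m + m = 2*m from by omega, hUeven, show 2*m+1 = 2*m+1 from rfl, hUodd]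
          exact Set.subset_union_left
        · subst hm2
          rw [show 2*m+1+1 = 2*(m+1) from by ring, hUodd, hUeven]
          exact Set.union_subset (ihmono m) ((hTsub m).trans Set.diff_subset)
      · intro j hj
        rcases Nat.even_or_odd j with ⟨m, hm2⟩ | ⟨m, hm2⟩
        · subst hm2; rw [show m + m = 2*m from by omega, hUeven]
          exact ihfull m (by omega)
        · subst hm2; rw [hUodd]
          have h1 : U n m = X := ihfull m (by omega)
          refine Set.Subset.antisymm ?_ ?_
          · refine Set.union_subset (ihsub m) (((hTsub m).trans Set.diff_subset).trans (ihsub _))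
          · rw [← h1]; exact Set.subset_union_left
      · intro j hj i
        have hXint : IntegrableOn (g i) X := (hint i).mono_set hXs
        rcases Nat.even_or_odd j with ⟨m, hm2⟩ | ⟨m, hm2⟩
        · subst hm2
          rw [show m + m = 2*m from by omega] at hj ⊢
          rw [hUeven, ihval m (by omega) i]
          have hs : ((2*m:ℕ):ℝ)/2^(n+1) = (m:ℝ)/2^n := by
            have h2n : (2:ℝ)^n ≠ 0 := by positivity
            push_cast
            rw [pow_succ]
            field_simp
          rw [hs]
        · subst hm2
          rw [hUodd]
          have hmle : m + 1 ≤ 2^n := by omega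
          have hdisj : Disjoint (U n m) (Hf (U n (m+1) \ U n m)) := by
            refine Set.disjoint_left.mpr fun x hx hx2 => ?_
            exact ((hTsub m) hx2).2 hx
          have hint1 : IntegrableOn (g i) (U n m) := hXint.mono_set (ihsub m)
          have hint2 : IntegrableOn (g i) (Hf (U n (m+1) \ U n m)) :=
            hXint.mono_set (((hTsub m).trans Set.diff_subset).trans (ihsub _))
          rw [setIntegral_union hdisj (hTm m) hint1 hint2]
          have hdiffval : (∫ x in (U n (m+1) \ U n m), g i x)
              = ((m+1:ℝ)/2^n) * (∫ x in X, g i x) - ((m:ℝ)/2^n) * ∫ x in X, g i x := by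
            rw [integral_diff (ihm m) (hXint.mono_set (ihsub (m+1))) (ihmono m)]
            rw [ihval (m+1) hmle i, ihval m (by omega) i]
            push_cast; ring
          rw [(hT m).2.2 i, hdiffval, ihval m (by omega) i]
          have hs : ((2*m+1:ℕ):ℝ)/2^(n+1)
              = (m:ℝ)/2^n + 1/2*(((m:ℝ)+1)/2^n - (m:ℝ)/2^n) := by
            have h2n : (2:ℝ)^n ≠ 0 := by positivity
            push_cast
            rw [pow_succ]
            field_simp
            ring
          rw [hs]
          ring
  -- the family
  have hjmono : ∀ n, Monotone (U n) := fun n =>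
    monotone_nat_of_le_succ (fun j => (inv n).2.2.1 j)
  set clamp : ℝ → ℝ := fun t => min 1 (max 0 t) with hclampdef
  have hclampmem : ∀ t, clamp t ∈ Set.Icc (0:ℝ) 1 :=
    fun t => ⟨le_min zero_le_one (le_max_left _ _), min_le_left _ _⟩
  have hclampid : ∀ t ∈ Set.Icc (0:ℝ) 1, clamp t = t := by
    intro t ht; rw [hclampdef]; simp [max_eq_right ht.1, min_eq_right ht.2]
  set S0 : ℝ → Set ℝ := fun t => ⋃ n, U n ⌊t * 2^n⌋₊ with hS0def
  have hseqmono : ∀ t ∈ Set.Icc (0:ℝ) 1, Monotone (fun n => U n ⌊t * 2^n⌋₊) := by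
    intro t ht
    apply monotone_nat_of_le_succ
    intro n
    have h1 : U n ⌊t * 2^n⌋₊ = U (n+1) (2 * ⌊t * 2^n⌋₊) := (hUeven n _).symm
    rw [h1]
    apply hjmono (n+1)
    have : ((2 * ⌊t * 2^n⌋₊ : ℕ) : ℝ) ≤ t * 2^(n+1) := by
      push_cast
      rw [pow_succ]
      have := Nat.floor_le (mul_nonneg ht.1 (by positivity) : (0:ℝ) ≤ t * 2^n)
      nlinarith
    exact Nat.le_floor this
  have hS0m : ∀ t, MeasurableSet (S0 t) := fun t =>
    MeasurableSet.iUnion (fun n => (inv n).1 _)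
  have hS0sub : ∀ t, S0 t ⊆ X := fun t => Set.iUnion_subset (fun n => (inv n).2.1 _)
  have hS0val : ∀ t ∈ Set.Icc (0:ℝ) 1, ∀ i,
      (∫ x in S0 t, g i x) = t * ∫ x in X, g i x := by
    intro t ht i
    have hlim := tendsto_setIntegral_of_monotone (μ := volume)
      (s := fun n => U n ⌊t * 2^n⌋₊) (f := g i)
      (fun n => (inv n).1 _) (hseqmono t ht)
      ((hint i).mono_set ((hS0sub t).trans hXs))
    have heq : ∀ n, (∫ x in U n ⌊t * 2^n⌋₊, g i x)
        = ((⌊t * 2^n⌋₊:ℝ)/2^n) * ∫ x in X, g i x := by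
      intro n
      refine (inv n).2.2.2.2 _ ?_ i
      have : t * 2^n ≤ ((2^n : ℕ) : ℝ) := by
        push_cast; nlinarith [ht.1, ht.2, pow_pos (by norm_num : (0:ℝ) < 2) n]
      calc ⌊t * 2^n⌋₊ ≤ ⌊((2^n : ℕ) : ℝ)⌋₊ := Nat.floor_mono this
        _ = 2^n := Nat.floor_natCast _
    have hfloor : Filter.Tendsto (fun n => (⌊t * 2^n⌋₊:ℝ)/2^n) Filter.atTop (nhds t) := by
      have hup : ∀ n : ℕ, (⌊t * 2^n⌋₊:ℝ)/2^n ≤ t := by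
        intro n
        rw [div_le_iff₀ (by positivity : (0:ℝ) < (2:ℝ)^n)]
        exact Nat.floor_le (mul_nonneg ht.1 (by positivity))
      have hlo : ∀ n : ℕ, t - (1/2)^n ≤ (⌊t * 2^n⌋₊:ℝ)/2^n := by
        intro n
        rw [le_div_iff₀ (by positivity : (0:ℝ) < (2:ℝ)^n)]
        have h1 := Nat.sub_one_lt_floor (t * 2^n)
        have h2 : ((1:ℝ)/2)^n * 2^n = 1 := by
          rw [← mul_pow]; norm_num
        have h3 : (t - (1/2)^n) * 2^n = t * 2^n - 1 := by
          rw [sub_mul, h2]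
        rw [h3]
        linarith
      have hlolim : Filter.Tendsto (fun n : ℕ => t - (1/2)^n) Filter.atTop (nhds t) := by
        have : Filter.Tendsto (fun n : ℕ => ((1:ℝ)/2)^n) Filter.atTop (nhds 0) :=
          tendsto_pow_atTop_nhds_zero_of_lt_one (by norm_num) (by norm_num)
        simpa using Filter.Tendsto.const_sub t this
      exact tendsto_of_tendsto_of_tendsto_of_le_of_le hlolim tendsto_const_nhds hlo hup
    have hlim2 : Filter.Tendsto (fun n => (∫ x in U n ⌊t * 2^n⌋₊, g i x))
        Filter.atTop (nhds (t * ∫ x in X, g i x)) := by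
      rw [show (fun n => (∫ x in U n ⌊t * 2^n⌋₊, g i x))
        = fun n => ((⌊t * 2^n⌋₊:ℝ)/2^n) * ∫ x in X, g i x from funext heq]
      exact hfloor.mul_const _
    exact tendsto_nhds_unique hlim hlim2
  refine ⟨fun t => S0 (clamp t), fun t => hS0m _, fun t => hS0sub _, ?_, ?_⟩
  · intro s t hst
    apply Set.iUnion_mono
    intro n
    apply hjmono n
    apply Nat.floor_mono
    have h1 : clamp s ≤ clamp t := min_le_min le_rfl (max_le_max le_rfl hst)
    nlinarith [pow_pos (by norm_num : (0:ℝ) < 2) n]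
  · intro t ht i
    show (∫ x in S0 (clamp t), g i x) = t * ∫ x in X, g i x
    rw [hclampid t ht]
    exact hS0val t ht i

lemma vol_toReal_le_one {Y : Set ℝ} (hYs : Y ⊆ Set.Icc 0 1) : (volume Y).toReal ≤ 1 := by
  have h1 : volume Y ≤ volume (Set.Icc (0:ℝ) 1) := measure_mono hYs
  have h2 : volume (Set.Icc (0:ℝ) 1) = 1 := by simp [Real.volume_Icc]
  calc (volume Y).toReal ≤ (volume (Set.Icc (0:ℝ) 1)).toReal :=
        ENNReal.toReal_mono (by simp [h2]) h1
    _ = 1 := by simp [h2]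

lemma vol_ne_top {Y : Set ℝ} (hYs : Y ⊆ Set.Icc 0 1) : volume Y ≠ ⊤ :=
  ((measure_mono hYs).trans_lt (by simp [Real.volume_Icc])).ne

lemma master : ∀ (k : ℕ) (g : Fin k → ℝ → ℝ),
    (∀ i, IntegrableOn (g i) (Set.Icc 0 1)) →
    ∀ X : Set ℝ, MeasurableSet X → X ⊆ Set.Icc 0 1 →
    ∃ S : ℝ → Set ℝ, (∀ t, MeasurableSet (S t)) ∧ (∀ t, S t ⊆ X) ∧
      (∀ s t, s ≤ t → S s ⊆ S t) ∧
      (∀ t ∈ Set.Icc (0:ℝ) 1, ((∫ x in S t, (1:ℝ)) = t * ∫ x in X, (1:ℝ)) ∧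
        ∀ i, (∫ x in S t, g i x) = t * ∫ x in X, g i x) := by
  intro k
  induction k with
  | zero =>
    intro g hint X hXm hXs
    obtain ⟨S, h1, h2, h3, h4⟩ := quantile_fam X hXm hXs
    exact ⟨S, h1, h2, h3, fun t ht => ⟨h4 t ht, fun i => i.elim0⟩⟩
  | succ k ih =>
    intro g hint X hXm hXs
    set gO : Option (Fin (k+1)) → ℝ → ℝ := fun o => o.elim (fun _ => (1:ℝ)) g with hgO
    have hintO : ∀ o, IntegrableOn (gO o) (Set.Icc 0 1) := by
      rintro (_ | i)
      · exact (integrableOn_const_iff (C := (1:ℝ))).mpr (Or.inr (by simp [Real.volume_Icc]))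
      · exact hint i
    have HALF : ∀ Y : Set ℝ, MeasurableSet Y → Y ⊆ Set.Icc 0 1 →
        ∃ T, MeasurableSet T ∧ T ⊆ Y ∧ ∀ o, (∫ x in T, gO o x) = (1/2) * ∫ x in Y, gO o x := by
      intro Y hYm hYs
      obtain ⟨S, hSm, hSsub, hSmono, hSval⟩ := ih (fun i => g i.castSucc)
        (fun i => hint _) Y hYm hYs
      set G : ℝ → ℝ := g (Fin.last k) with hGdef
      have hGint : IntegrableOn G (Set.Icc 0 1) := hint _
      set V : ℝ → ℝ := fun t => ∫ x in S t, G x with hVdef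
      have hSfin : ∀ t, volume (S t) ≠ ⊤ := fun t => vol_ne_top ((hSsub t).trans hYs)
      have hSIcc : ∀ t, S t ⊆ Set.Icc 0 1 := fun t => (hSsub t).trans hYs
      have hintS : ∀ t, IntegrableOn G (S t) := fun t => hGint.mono_set (hSIcc t)
      have hdiffInt : ∀ s t : ℝ, s ∈ Set.Icc (0:ℝ) 1 → t ∈ Set.Icc (0:ℝ) 1 → s ≤ t →
          (∫ x in (S t \ S s), G x) = V t - V s := by
        intro s t hs ht hst
        rw [hVdef]
        exact integral_diff (hSm s) (hintS t) (hSmono s t hst)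
      have hdiffvol : ∀ s t : ℝ, s ∈ Set.Icc (0:ℝ) 1 → t ∈ Set.Icc (0:ℝ) 1 → s ≤ t →
          (volume (S t \ S s)).toReal = (t - s) * ∫ x in Y, (1:ℝ) := by
        intro s t hs ht hst
        have h1 : (∫ x in (S t \ S s), (1:ℝ)) = (t - s) * ∫ x in Y, (1:ℝ) := by
          rw [integral_diff (hSm s) ((integrableOn_const_iff (C := (1:ℝ))).mpr (Or.inr
            ((vol_ne_top (hSIcc t)).lt_top))) (hSmono s t hst)]
          rw [(hSval t ht).1, (hSval s hs).1]
          ring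
        rw [← h1]
        simp [setIntegral_const, measureReal_def]
      have hY1 : (∫ x in Y, (1:ℝ)) = (volume Y).toReal := by simp [setIntegral_const, measureReal_def]
      have hY1nn : 0 ≤ ∫ x in Y, (1:ℝ) := by rw [hY1]; positivity
      have hY1le : (∫ x in Y, (1:ℝ)) ≤ 1 := by rw [hY1]; exact vol_toReal_le_one hYs
      have hVcont : ContinuousOn V (Set.Icc 0 1) := by
        rw [Metric.continuousOn_iff]
        intro b hb ε hε
        obtain ⟨δ, hδpos, hδ⟩ := my_abscont hGint hε
        refine ⟨δ, hδpos, fun a ha hab => ?_⟩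
        have key : ∀ s t : ℝ, s ∈ Set.Icc (0:ℝ) 1 → t ∈ Set.Icc (0:ℝ) 1 → s ≤ t →
            t - s < δ → |V t - V s| < ε := by
          intro s t hs ht hst hlt
          rw [← hdiffInt s t hs ht hst]
          refine hδ _ ((hSm t).diff (hSm s)) (Set.diff_subset.trans (hSIcc t)) ?_
          rw [hdiffvol s t hs ht hst]
          calc (t - s) * ∫ x in Y, (1:ℝ) ≤ (t - s) * 1 := by
                refine mul_le_mul_of_nonneg_left hY1le (by linarith)
            _ < δ := by linarith
        rw [Real.dist_eq] at hab
        rw [Real.dist_eq]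
        rcases le_total a b with h | h
        · rw [abs_sub_comm]
          exact key a b ha hb h (by rw [abs_of_nonpos (by linarith)] at hab; linarith)
        · exact key b a hb ha h (by rw [abs_of_nonneg (by linarith)] at hab; linarith)
      set M : ℝ := ∫ x in Y, G x with hMdef
      have hV0 : V 0 = 0 := by
        have h1 : (∫ x in S 0, (1:ℝ)) = 0 := by
          rw [(hSval 0 (by norm_num)).1]; ring
        have h2 : (volume (S 0)).toReal = 0 := by
          have h1' := h1
          rwa [setIntegral_const, smul_eq_mul, mul_one] at h1'
        have h3 : volume (S 0) = 0 := by
          rcases (ENNReal.toReal_eq_zero_iff _).mp h2 with h | h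
          · exact h
          · exact absurd h (hSfin 0)
        rw [hVdef]
        simp only []
        rw [setIntegral_measure_zero _ h3]
      have hV1 : V 1 = M := by
        have hsub1 : S 1 ⊆ Y := hSsub 1
        have h1 : (∫ x in (Y \ S 1), (1:ℝ)) = 0 := by
          rw [integral_diff (hSm 1) ((integrableOn_const_iff (C := (1:ℝ))).mpr (Or.inr
            ((vol_ne_top hYs).lt_top))) hsub1]
          rw [(hSval 1 (by norm_num)).1]
          ring
        have h2 : volume (Y \ S 1) = 0 := by
          have h2' : (volume (Y \ S 1)).toReal = 0 := by
            have h1' := h1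
            rwa [setIntegral_const, smul_eq_mul, mul_one] at h1'
          rcases (ENNReal.toReal_eq_zero_iff _).mp h2' with h | h
          · exact h
          · exact absurd h (vol_ne_top (Set.diff_subset.trans hYs))
        have h3 : (∫ x in (Y \ S 1), G x) = 0 := by
          rw [setIntegral_measure_zero _ h2]
        have h4 := integral_diff (hSm 1) (hGint.mono_set hYs) hsub1
        rw [h3] at h4
        rw [hVdef, hMdef]
        simp only []
        linarith [h4]
      set χ : ℝ → ℝ := fun s => V (s + 1/2) - V s with hχdef
      have hχcont : ContinuousOn χ (Set.Icc 0 (1/2)) := by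
        apply ContinuousOn.sub
        · refine ContinuousOn.comp hVcont ((continuous_id.add continuous_const).continuousOn) ?_
          intro x hx
          exact ⟨by linarith [hx.1], by linarith [hx.2]⟩
        · exact hVcont.mono (fun x hx => ⟨hx.1, by linarith [hx.2]⟩)
      have hsum : χ 0 + χ (1/2) = M := by
        rw [hχdef]
        simp only []
        rw [show (0:ℝ) + 1/2 = 1/2 by norm_num, show (1:ℝ)/2 + 1/2 = 1 by norm_num]
        rw [hV0, hV1]
        ring
      have hmem : M/2 ∈ Set.uIcc (χ 0) (χ (1/2)) := by
        rw [Set.mem_uIcc]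
        rcases le_total (χ 0) (χ (1/2)) with h | h
        · left; constructor <;> linarith
        · right; constructor <;> linarith
      have huIcc : Set.uIcc (0:ℝ) (1/2) = Set.Icc 0 (1/2) := Set.uIcc_of_le (by norm_num)
      have hIVT := intermediate_value_uIcc (by rw [huIcc]; exact hχcont)
      obtain ⟨s, hs, hχs⟩ := hIVT hmem
      rw [huIcc] at hs
      have hs01 : s ∈ Set.Icc (0:ℝ) 1 := ⟨hs.1, by linarith [hs.2]⟩
      have hs1201 : s + 1/2 ∈ Set.Icc (0:ℝ) 1 := ⟨by linarith [hs.1], by linarith [hs.2]⟩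
      have hsle : s ≤ s + 1/2 := by linarith
      refine ⟨S (s + 1/2) \ S s, (hSm _).diff (hSm _), Set.diff_subset.trans (hSsub _), ?_⟩
      rintro (_ | i)
      · show (∫ x in (S (s+1/2) \ S s), (1:ℝ)) = (1/2) * ∫ x in Y, (1:ℝ)
        rw [integral_diff (hSm s) ((integrableOn_const_iff (C := (1:ℝ))).mpr (Or.inr
          ((vol_ne_top (hSIcc (s+1/2))).lt_top))) (hSmono s (s+1/2) hsle)]
        rw [(hSval (s+1/2) hs1201).1, (hSval s hs01).1]
        ring
      · show (∫ x in (S (s+1/2) \ S s), g i x) = (1/2) * ∫ x in Y, g i x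
        induction i using Fin.lastCases with
        | last =>
          have h := hdiffInt s (s+1/2) hs01 hs1201 hsle
          have h2 : V (s+1/2) - V s = M/2 := hχs
          show (∫ x in (S (s+1/2) \ S s), G x) = (1/2) * M
          rw [h]
          linarith
        | cast i' =>
          rw [integral_diff (hSm s) ((hint _).mono_set (hSIcc (s+1/2)))
            (hSmono s (s+1/2) hsle), (hSval (s+1/2) hs1201).2 i', (hSval s hs01).2 i']
          ring
    obtain ⟨S, h1, h2, h3, h4⟩ := fam_of_half gO hintO HALF X hXm hXs
    exact ⟨S, h1, h2, h3, fun t ht => ⟨h4 t ht none, fun i => h4 t ht (some i)⟩⟩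

/-- Let `A` be an EF1 allocation of the items, each agent value the whole cake at
`0` or `1`, and `N⁺` be the set of agents valuing the cake at `1`. If there are payments
`(p_i)` on `N⁺` that are nonnegative, sum to `1`, and make `{(A_i, p_i)}` EFM with money among
`N⁺`, then there is a measurable partition of the cake giving no cake to agents outside `N⁺`
such that the combined allocation is EFM. -/
theorem efm_with_money_to_efm_with_cake
    (n : ℕ) (I : Type) [Fintype I] [DecidableEq I]
    (u : Fin n → I → ℝ)
    (f : Fin n → ℝ → ℝ)
    (hf_nonneg : ∀ i x, 0 ≤ f i x)
    (hf_int : ∀ i, IntegrableOn (f i) (Set.Icc (0 : ℝ) 1))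
    -- each agent values the whole cake at 0 or 1
    (hf_norm : ∀ i, (∫ x in Set.Icc (0 : ℝ) 1, f i x) = 0 ∨
      (∫ x in Set.Icc (0 : ℝ) 1, f i x) = 1)
    (A : Fin n → Finset I)
    -- A is a partition of the items
    (hA_disj : ∀ i j, i ≠ j → Disjoint (A i) (A j))
    (hA_cover : Finset.univ.biUnion A = Finset.univ)
    -- A is EF1
    (hEF1 : ∀ i j : Fin n,
      (∑ t ∈ A i, u i t) ≥ (∑ t ∈ A j, u i t) ∨
        ∃ t ∈ A i ∪ A j,
          (∑ s ∈ (A i).erase t, u i s) ≥ ∑ s ∈ (A j).erase t, u i s)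
    -- N⁺ = set of agents who value the whole cake at 1
    (Np : Finset (Fin n))
    (hNp : ∀ i, i ∈ Np ↔ (∫ x in Set.Icc (0 : ℝ) 1, f i x) = 1)
    -- payments on N⁺, nonnegative, summing to 1
    (p : Fin n → ℝ)
    (hp_nonneg : ∀ i ∈ Np, 0 ≤ p i)
    (hp_sum : ∑ i ∈ Np, p i = 1)
    -- {(A_i, p_i)}_{i ∈ N⁺} is EFM with money among agents in N⁺
    (hEFMmoney : ∀ i ∈ Np, ∀ j ∈ Np,
      (∑ t ∈ A i, u i t) + p i ≥ (∑ t ∈ A j, u i t) + p j ∨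
        (p j = 0 ∧
          ∃ t ∈ A i ∪ A j,
            (∑ s ∈ (A i).erase t, u i s) ≥ ∑ s ∈ (A j).erase t, u i s)) :
    ∃ C : Fin n → Set ℝ,
      (∀ i, MeasurableSet (C i)) ∧
      (∀ i j, i ≠ j → Disjoint (C i) (C j)) ∧
      ((⋃ i, C i) = Set.Icc (0 : ℝ) 1) ∧
      (∀ i, i ∉ Np → C i = ∅) ∧
      -- combined allocation is EFM
      (∀ i j : Fin n,
        (∑ t ∈ A i, u i t) + (∫ x in C i, f i x) ≥
            (∑ t ∈ A j, u i t) + (∫ x in C j, f i x) ∨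
          ((∫ x in C j, f i x) = 0 ∧
            ∃ t ∈ A i ∪ A j,
              (∑ s ∈ (A i).erase t, u i s) ≥ ∑ s ∈ (A j).erase t, u i s)) := by
  classical
  -- N⁺ is nonempty
  have hNpne : Np.Nonempty := by
    rcases Finset.eq_empty_or_nonempty Np with h | h
    · rw [h] at hp_sum; simp at hp_sum
    · exact h
  obtain ⟨j0, hj0⟩ := hNpne
  -- cake values
  set τ : Fin n → ℝ := fun i => ∫ x in Set.Icc (0:ℝ) 1, f i x with hτdef
  have hτval : ∀ i, τ i = if i ∈ Np then 1 else 0 := by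
    intro i
    by_cases h : i ∈ Np
    · rw [if_pos h]; exact (hNp i).mp h
    · rw [if_neg h]
      rcases hf_norm i with h1 | h1
      · exact h1
      · exact absurd ((hNp i).mpr h1) h
  have hτnn : ∀ i, 0 ≤ τ i := by
    intro i; rw [hτval]; split <;> norm_num
  -- the weights
  set w : Fin n → ℝ := fun j => if j ∈ Np then p j else 0 with hwdef
  have hw0 : ∀ j, 0 ≤ w j := by
    intro j; rw [hwdef]; dsimp only; split
    · exact hp_nonneg j ‹_›
    · exact le_rfl
  have hwsum : ∑ j, w j = 1 := by
    rw [hwdef]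
    rw [Finset.sum_ite_mem, Finset.univ_inter]
    exact hp_sum
  -- cumulative sums
  set Pn : ℕ → ℝ := fun r => ∑ l ∈ Finset.univ.filter (fun l : Fin n => (l:ℕ) < r), w l
    with hPndef
  have hPn_mono : ∀ r r' : ℕ, r ≤ r' → Pn r ≤ Pn r' := by
    intro r r' h
    apply Finset.sum_le_sum_of_subset_of_nonneg
    · intro l hl
      simp only [Finset.mem_filter] at *
      exact ⟨hl.1, lt_of_lt_of_le hl.2 h⟩
    · intro l _ _; exact hw0 l
  have hPn0 : Pn 0 = 0 := by
    rw [hPndef]; simp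
  have hPnn : Pn n = 1 := by
    rw [hPndef]
    dsimp only
    rw [show Finset.univ.filter (fun l : Fin n => (l:ℕ) < n) = Finset.univ from by
      ext l; simp [l.isLt]]
    exact hwsum
  have hPn_nonneg : ∀ r, 0 ≤ Pn r := fun r => Finset.sum_nonneg (fun l _ => hw0 l)
  have hPn_le1 : ∀ r, Pn r ≤ 1 := by
    intro r
    rw [← hwsum]
    apply Finset.sum_le_sum_of_subset_of_nonneg (Finset.filter_subset _ _)
    intro l _ _; exact hw0 l
  set P : Fin n → ℝ := fun j => Pn ((j:ℕ) + 1) with hPdef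
  set Q : Fin n → ℝ := fun j => Pn (j:ℕ) with hQdef
  have hPQ : ∀ j, P j = Q j + w j := by
    intro j
    rw [hPdef, hQdef, hPndef]
    dsimp only
    have hins : Finset.univ.filter (fun l : Fin n => (l:ℕ) < (j:ℕ) + 1)
        = insert j (Finset.univ.filter (fun l : Fin n => (l:ℕ) < (j:ℕ))) := by
      ext l
      simp only [Finset.mem_filter, Finset.mem_insert, Finset.mem_univ, true_and]
      constructor
      · intro h
        rcases Nat.lt_succ_iff_lt_or_eq.mp h with h | h
        · exact Or.inr h
        · exact Or.inl (Fin.ext h)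
      · rintro (rfl | h)
        · omega
        · omega
    rw [hins, Finset.sum_insert (by simp)]
    ring
  have hQP : ∀ j, Q j ≤ P j := fun j => hPn_mono _ _ (Nat.le_succ _)
  have hPmem : ∀ j, P j ∈ Set.Icc (0:ℝ) 1 := fun j => ⟨hPn_nonneg _, hPn_le1 _⟩
  have hQmem : ∀ j, Q j ∈ Set.Icc (0:ℝ) 1 := fun j => ⟨hPn_nonneg _, hPn_le1 _⟩
  -- the consensus family
  obtain ⟨S, hSm, hSsub, hSmono, hSval⟩ := master n f hf_int (Set.Icc 0 1)
    measurableSet_Icc le_rfl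
  have hIcc1 : (∫ x in Set.Icc (0:ℝ) 1, (1:ℝ)) = 1 := by
    rw [setIntegral_const]
    simp [Real.volume_Icc]
  have hSIcc : ∀ t, S t ⊆ Set.Icc (0:ℝ) 1 := hSsub
  have vol_ne_top : ∀ Y : Set ℝ, Y ⊆ Set.Icc 0 1 → volume Y ≠ ⊤ := fun Y hY =>
    ((measure_mono hY).trans_lt (by simp [Real.volume_Icc])).ne
  -- null leftovers
  have hS0null : volume (S 0) = 0 := by
    have h1 : (∫ x in S 0, (1:ℝ)) = 0 := by
      rw [(hSval 0 (by norm_num)).1]; ring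
    rw [setIntegral_const, smul_eq_mul, mul_one] at h1
    rcases (ENNReal.toReal_eq_zero_iff _).mp h1 with h | h
    · exact h
    · exact absurd h (vol_ne_top _ (hSIcc 0))
  have hS1null : volume (Set.Icc (0:ℝ) 1 \ S 1) = 0 := by
    have h1 : (∫ x in (Set.Icc (0:ℝ) 1 \ S 1), (1:ℝ)) = 0 := by
      rw [integral_diff (hSm 1) ((integrableOn_const_iff (C := (1:ℝ))).mpr (Or.inr
        (by simp [Real.volume_Icc]))) (hSsub 1)]
      rw [(hSval 1 (by norm_num)).1, hIcc1]
      ring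
    rw [setIntegral_const, smul_eq_mul, mul_one] at h1
    rcases (ENNReal.toReal_eq_zero_iff _).mp h1 with h | h
    · exact h
    · exact absurd h (vol_ne_top _ (Set.diff_subset))
  -- pieces
  set piece : Fin n → Set ℝ := fun j => S (P j) \ S (Q j) with hpiecedef
  set L : Set ℝ := (Set.Icc (0:ℝ) 1 \ S 1) ∪ S 0 with hLdef
  set C : Fin n → Set ℝ := fun j => if j = j0 then piece j ∪ L else piece j with hCdef
  have hLnull : volume L = 0 := measure_union_null hS1null hS0null
  have hLsub : L ⊆ Set.Icc (0:ℝ) 1 := Set.union_subset Set.diff_subset (hSIcc 0)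
  have hLm : MeasurableSet L := (measurableSet_Icc.diff (hSm 1)).union (hSm 0)
  have hpiecesub : ∀ j, piece j ⊆ Set.Icc (0:ℝ) 1 :=
    fun j => Set.diff_subset.trans (hSIcc _)
  have hpiecem : ∀ j, MeasurableSet (piece j) := fun j => (hSm _).diff (hSm _)
  have hCsub : ∀ j, C j ⊆ Set.Icc (0:ℝ) 1 := by
    intro j; rw [hCdef]; dsimp only; split
    · exact Set.union_subset (hpiecesub j) hLsub
    · exact hpiecesub j
  have hCm : ∀ j, MeasurableSet (C j) := by
    intro j; rw [hCdef]; dsimp only; split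
    · exact (hpiecem j).union hLm
    · exact hpiecem j
  -- disjointness
  have hdisjP : ∀ i j : Fin n, i ≠ j → Disjoint (piece i) (piece j) := by
    have key : ∀ i j : Fin n, i < j → Disjoint (piece i) (piece j) := by
      intro i j hij
      refine Set.disjoint_left.mpr fun x hxi hxj => ?_
      have h1 : P i ≤ Q j := hPn_mono _ _ (by
        have := hij
        rw [Fin.lt_def] at this
        omega)
      exact hxj.2 (hSmono _ _ h1 hxi.1)
    intro i j hij
    rcases lt_or_gt_of_ne hij with h | h
    · exact key i j h
    · exact (key j i h).symm
  have hdisjL : ∀ j : Fin n, Disjoint L (piece j) := by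
    intro j
    refine Set.disjoint_left.mpr fun x hxL hxj => ?_
    rcases hxL with hx | hx
    · exact hx.2 (hSmono _ _ (hPn_le1 _) hxj.1)
    · exact hxj.2 (hSmono _ _ (hPn_nonneg _) hx)
  have hCdisj : ∀ i j : Fin n, i ≠ j → Disjoint (C i) (C j) := by
    intro i j hij
    have hC : ∀ a, C a = if a = j0 then piece a ∪ L else piece a := fun a => rfl
    rcases eq_or_ne i j0 with hi0 | hi0
    · rcases eq_or_ne j j0 with hj0' | hj0'
      · exact absurd (hi0.trans hj0'.symm) hij
      · rw [hC i, hC j, if_pos hi0, if_neg hj0']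
        exact Disjoint.union_left (hdisjP i j hij) (hdisjL j)
    · rcases eq_or_ne j j0 with hj0' | hj0'
      · rw [hC i, hC j, if_neg hi0, if_pos hj0']
        exact Disjoint.union_right (hdisjP i j hij) (hdisjL i).symm
      · rw [hC i, hC j, if_neg hi0, if_neg hj0']
        exact hdisjP i j hij
  -- covering
  have hcover : (⋃ i, C i) = Set.Icc (0:ℝ) 1 := by
    apply Set.Subset.antisymm
    · exact Set.iUnion_subset hCsub
    · have claim : ∀ r : ℕ, r ≤ n → S (Pn r) ⊆ S 0 ∪ ⋃ j, piece j := by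
        intro r
        induction r with
        | zero => intro _; rw [hPn0]; exact Set.subset_union_left
        | succ r ihr =>
          intro hrn x hx
          set j : Fin n := ⟨r, by omega⟩ with hjdef
          by_cases hxq : x ∈ S (Q j)
          · exact ihr (by omega) hxq
          · refine Or.inr (Set.mem_iUnion.mpr ⟨j, ?_, hxq⟩)
            exact hx
      intro x hx
      by_cases hx1 : x ∈ S 1
      · have hx2 : x ∈ S (Pn n) := by rwa [hPnn]
        have hCj0 : C j0 = piece j0 ∪ L := if_pos rfl
        rcases claim n le_rfl hx2 with h | h
        · exact Set.mem_iUnion.mpr ⟨j0, by rw [hCj0]; exact Or.inr (Or.inr h)⟩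
        · obtain ⟨j, hj⟩ := Set.mem_iUnion.mp h
          refine Set.mem_iUnion.mpr ⟨j, ?_⟩
          rw [hCdef]; dsimp only; split
          · exact Or.inl hj
          · exact hj
      · have hCj0 : C j0 = piece j0 ∪ L := if_pos rfl
        refine Set.mem_iUnion.mpr ⟨j0, ?_⟩
        rw [hCj0]
        exact Or.inr (Or.inl ⟨hx, hx1⟩)
  -- empty for outsiders
  have hCempty : ∀ i, i ∉ Np → C i = ∅ := by
    intro i hi
    have hne : i ≠ j0 := fun h => hi (h ▸ hj0)
    rw [hCdef]
    dsimp only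
    rw [if_neg hne, hpiecedef]
    dsimp only
    have : P i = Q i := by
      rw [hPQ i, hwdef]; dsimp only; rw [if_neg hi]; ring
    rw [this, Set.diff_self]
  -- integrals
  have hpieceint : ∀ i j, (∫ x in piece j, f i x) = w j * τ i := by
    intro i j
    rw [hpiecedef]
    dsimp only
    rw [integral_diff (hSm (Q j)) ((hf_int i).mono_set (hSIcc _)) (hSmono _ _ (hQP j))]
    rw [(hSval (P j) (hPmem j)).2 i, (hSval (Q j) (hQmem j)).2 i]
    rw [hPQ j]
    ring
  have hCint : ∀ i j, (∫ x in C j, f i x) = w j * τ i := by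
    intro i j
    rw [hCdef]
    dsimp only
    split
    · rw [setIntegral_union (hdisjL j).symm hLm
        ((hf_int i).mono_set (hpiecesub j)) ((hf_int i).mono_set hLsub)]
      rw [setIntegral_measure_zero _ hLnull, hpieceint i j]
      ring
    · exact hpieceint i j
  -- conclusion
  refine ⟨C, hCm, hCdisj, hcover, hCempty, ?_⟩
  intro i j
  by_cases hz : (∫ x in C j, f i x) = 0
  · rcases hEF1 i j with h | h
    · left
      have h0 : 0 ≤ ∫ x in C i, f i x := by
        rw [hCint i i]
        exact mul_nonneg (hw0 i) (hτnn i)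
      rw [hz]
      linarith [h]
    · exact Or.inr ⟨hz, h⟩
  · -- the integral is nonzero: i ∈ Np, j ∈ Np, p j ≠ 0
    rw [hCint i j] at hz
    have hiNp : i ∈ Np := by
      by_contra h
      apply hz
      rw [hτval i, if_neg h]
      ring
    have hjNp : j ∈ Np := by
      by_contra h
      apply hz
      rw [hwdef]; dsimp only; rw [if_neg h]
      ring
    have hwj : w j = p j := by rw [hwdef]; dsimp only; rw [if_pos hjNp]
    have hwi : w i = p i := by rw [hwdef]; dsimp only; rw [if_pos hiNp]
    have hpj : p j ≠ 0 := by
      intro h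
      apply hz
      rw [hwj, h]
      ring
    rcases hEFMmoney i hiNp j hjNp with h | ⟨h, _⟩
    · left
      rw [hCint i i, hCint i j, hwi, hwj, hτval i, if_pos hiNp, mul_one, mul_one]
      linarith [h]
    · exact absurd h hpj
end

section
/- Let A = (A_1,…,A_n) be an allocation of indivisible items that is both EF1 and envy-freeable. Then there exist payments p_1,…,p_n ≥ 0 with Σ_{i=1}^n p_i = 1 such that the allocation with money {(A_i, p_i)}_{i∈N} is EFM with money: for every pair of agents i, j, either u_i(A_i) + p_i ≥ u_i(A_j) + p_j, or both p_j = 0 and there exists an item t ∈ A_i ∪ A_j with u_i(A_i \ {t}) ≥ u_i(A_j \ {t}). -/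
/-- If `A` is an EF1 and envy-freeable allocation of the indivisible items, then
one unit of money can be distributed as nonnegative payments `p_1, …, p_n` summing to `1`
such that `{(A_i, p_i)}` is EFM with money. -/
theorem ef1_envy_freeable_to_efm_with_money
    (n : ℕ) (hn : 0 < n) (I : Type) [Fintype I] [DecidableEq I]
    (u : Fin n → I → ℝ)
    (A : Fin n → Finset I)
    -- A is a partition of the items
    (hA_disj : ∀ i j, i ≠ j → Disjoint (A i) (A j))
    (hA_cover : Finset.univ.biUnion A = Finset.univ)
    -- A is EF1
    (hEF1 : ∀ i j : Fin n,
      (∑ t ∈ A i, u i t) ≥ (∑ t ∈ A j, u i t) ∨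
        ∃ t ∈ A i ∪ A j,
          (∑ s ∈ (A i).erase t, u i s) ≥ ∑ s ∈ (A j).erase t, u i s)
    -- A is envy-freeable
    (hEFable : ∃ q : Fin n → ℝ, (∀ i, 0 ≤ q i) ∧
      ∀ i j : Fin n, (∑ t ∈ A i, u i t) + q i ≥ (∑ t ∈ A j, u i t) + q j) :
    ∃ p : Fin n → ℝ,
      (∀ i, 0 ≤ p i) ∧
      (∑ i, p i) = 1 ∧
      -- {(A_i, p_i)} is EFM with money
      (∀ i j : Fin n,
        (∑ t ∈ A i, u i t) + p i ≥ (∑ t ∈ A j, u i t) + p j ∨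
          (p j = 0 ∧
            ∃ t ∈ A i ∪ A j,
              (∑ s ∈ (A i).erase t, u i s) ≥ ∑ s ∈ (A j).erase t, u i s)) := by
  obtain ⟨q, hq0, hq⟩ := hEFable
  have hne : Nonempty (Fin n) := ⟨⟨0, hn⟩⟩
  obtain ⟨i₀, hi₀⟩ := Finite.exists_max q
  set M : ℝ := q i₀ with hM
  set f : ℝ → ℝ := fun θ => ∑ i, max (q i - θ) 0 with hf
  have hcont : Continuous f := by
    apply continuous_finset_sum
    intro i _
    exact (continuous_const.sub continuous_id).max continuous_const
  have hfM : f M = 0 := by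
    apply Finset.sum_eq_zero
    intro i _
    have : q i - M ≤ 0 := by have := hi₀ i; linarith
    exact max_eq_right this
  have hfM1 : 1 ≤ f (M - 1) := by
    have h1 : max (q i₀ - (M - 1)) 0 = 1 := by
      rw [max_eq_left] <;> simp [hM]
    calc (1 : ℝ) = max (q i₀ - (M - 1)) 0 := h1.symm
      _ ≤ f (M - 1) := Finset.single_le_sum (f := fun i => max (q i - (M - 1)) 0)
          (fun i _ => le_max_right _ _) (Finset.mem_univ i₀)
  have hIVT := intermediate_value_Icc' (by linarith : M - 1 ≤ M) hcont.continuousOn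
  have h1mem : (1 : ℝ) ∈ Set.Icc (f M) (f (M - 1)) := ⟨by rw [hfM]; norm_num, hfM1⟩
  obtain ⟨θ, _, hθ⟩ := hIVT h1mem
  refine ⟨fun i => max (q i - θ) 0, fun i => le_max_right _ _, hθ, ?_⟩
  intro i j
  by_cases hpj : q j - θ ≤ 0
  · -- p j = 0, fall back to EF1
    have hpj0 : max (q j - θ) 0 = 0 := max_eq_right hpj
    rcases hEF1 i j with h | h
    · left
      have : (0 : ℝ) ≤ max (q i - θ) 0 := le_max_right _ _
      dsimp only; rw [hpj0]; linarith
    · right; exact ⟨hpj0, h⟩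
  · -- p j > 0: full envy-freeness with money
    left
    push_neg at hpj
    have hpj' : max (q j - θ) 0 = q j - θ := max_eq_left (le_of_lt hpj)
    have hpi : q i - θ ≤ max (q i - θ) 0 := le_max_left _ _
    have := hq i j
    dsimp only; rw [hpj']
    linarith
end

section
/- Let A = (A_1,…,A_n) be an allocation of indivisible items whose envy graph has no positive-weight directed cycle. For each agent i, let ℓ(i) denote the maximum total weight of a directed path in the envy graph starting at node i (the empty path, of weight 0, is allowed). Then ℓ(i) ≥ 0 for every i, and the payments p_i = ℓ(i) make the allocation envy-free with money: u_i(A_i) + ℓ(i) ≥ u_i(A_j) + ℓ(j) for all agents i, j. -/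
/-!
Let `w i j` be the weight of the edge `(i, j)` and take a heaviest path `P` from `j`.
If `i` is not on `P`, prepending the edge `(i, j)` to `P` gives a path from `i`, so
`w i j + ℓ j ≤ ℓ i`. If `i` lies on `P`, split `P` at `i`: the part before `i`, closed by the
edge `(i, j)`, is a cycle and has weight `≤ 0`, while the part after `i` is a path from `i`;
again `ℓ j + w i j ≤ ℓ i`. For the envy graph, `w i j = u_i(A_j) - u_i(A_i)`, and this
inequality is envy-freeness with payments `ℓ`.
-/

open Function

namespace WeightedDigraph

variable {V : Type*} (w : V → V → ℝ)

def walkWeight {k : ℕ} (c : Fin (k + 1) → V) : ℝ :=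
  ∑ t : Fin k, w (c t.castSucc) (c t.succ)

def pathWeightsFrom (i : V) : Set ℝ :=
  {x | ∃ (k : ℕ) (c : Fin (k + 1) → V), Injective c ∧ c 0 = i ∧ x = walkWeight w c}

def NoPositiveCycle : Prop :=
  ∀ (k : ℕ) (c : Fin (k + 2) → V), Injective c → ∑ t, w (c t) (c (t + 1)) ≤ 0

variable {w}

theorem walkWeight_cons {k : ℕ} (i : V) (c : Fin (k + 1) → V) :
    walkWeight w (Fin.cons i c : Fin (k + 2) → V) = w i (c 0) + walkWeight w c := by
  simp only [walkWeight, Fin.sum_univ_succ, Fin.castSucc_zero, Fin.cons_zero, Fin.cons_succ,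
    ← Fin.succ_castSucc]

theorem walkWeight_eq_add {m r : ℕ} (c : Fin (m + r + 1) → V) :
    walkWeight w c = walkWeight w (fun t : Fin (m + 1) => c (Fin.castLE (by omega) t)) +
      walkWeight w (fun t : Fin (r + 1) => c (Fin.natAdd m t)) :=
  Fin.sum_univ_add _

theorem sum_cycle_eq_walkWeight_add {k : ℕ} (c : Fin (k + 2) → V) :
    ∑ t, w (c t) (c (t + 1)) = walkWeight w c + w (c (Fin.last _)) (c 0) := by
  rw [Fin.sum_univ_castSucc, Fin.last_add_one]
  simp only [walkWeight, Fin.coeSucc_eq_succ]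

theorem walkWeight_add_closing_le_zero (hloop : ∀ a, w a a ≤ 0) (hcyc : NoPositiveCycle w)
    {m : ℕ} {c : Fin (m + 1) → V} (hc : Injective c) :
    walkWeight w c + w (c (Fin.last m)) (c 0) ≤ 0 := by
  cases m with
  | zero => simpa [walkWeight] using hloop (c 0)
  | succ m => simpa only [sum_cycle_eq_walkWeight_add] using hcyc m c hc

theorem zero_mem_pathWeightsFrom (i : V) : (0 : ℝ) ∈ pathWeightsFrom w i :=
  ⟨0, fun _ => i, fun a b _ => Subsingleton.elim (α := Fin 1) a b, rfl, by simp [walkWeight]⟩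

theorem add_le_of_isGreatest_pathWeightsFrom (hloop : ∀ a, w a a ≤ 0)
    (hcyc : NoPositiveCycle w) {ℓ : V → ℝ} (hℓ : ∀ i, IsGreatest (pathWeightsFrom w i) (ℓ i))
    (i j : V) : ℓ j + w i j ≤ ℓ i := by
  obtain ⟨k, c, hc, rfl, hℓj⟩ := (hℓ j).1
  by_cases hi : i ∈ Set.range c
  · obtain ⟨⟨m, hm⟩, rfl⟩ := hi
    obtain ⟨r, rfl⟩ := Nat.exists_eq_add_of_le (Nat.lt_succ_iff.mp hm)
    have hprefix : walkWeight w (fun t : Fin (m + 1) => c (Fin.castLE (by omega) t)) +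
        w (c ⟨m, hm⟩) (c 0) ≤ 0 :=
      walkWeight_add_closing_le_zero hloop hcyc (hc.comp (Fin.castLE_injective (by omega)))
    have hsuffix : walkWeight w (fun t : Fin (r + 1) => c (Fin.natAdd m t)) ≤ ℓ (c ⟨m, hm⟩) :=
      (hℓ _).2 ⟨r, _, hc.comp (Fin.natAdd_injective _ _), rfl, rfl⟩
    rw [hℓj, walkWeight_eq_add]
    linarith
  · have hpath : w i (c 0) + walkWeight w c ≤ ℓ i := by
      rw [← walkWeight_cons]
      exact (hℓ i).2 ⟨k + 1, _, Fin.cons_injective_iff.mpr ⟨hi, hc⟩, rfl, rfl⟩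
    linarith

end WeightedDigraph

theorem heaviest_path_payments_envy_free_general
    (n : ℕ) (I : Type)
    (u : Fin n → I → ℝ)
    (A : Fin n → Finset I)
    -- the envy graph has no positive-weight directed cycle
    (hNoPos : ∀ (k : ℕ), ∀ c : Fin (k + 2) → Fin n, Function.Injective c →
      (∑ t : Fin (k + 2),
        ((∑ s ∈ A (c (t + 1)), u (c t) s) - (∑ s ∈ A (c t), u (c t) s))) ≤ 0)
    -- ℓ i is the maximum weight of a directed path starting at i
    (ℓ : Fin n → ℝ)
    (hℓ : ∀ i : Fin n, IsGreatest
      {x : ℝ | ∃ (k : ℕ) (c : Fin (k + 1) → Fin n),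
        Function.Injective c ∧ c 0 = i ∧
        x = ∑ t : Fin k,
          ((∑ s ∈ A (c t.succ), u (c t.castSucc) s) -
            (∑ s ∈ A (c t.castSucc), u (c t.castSucc) s))}
      (ℓ i)) :
    (∀ i, 0 ≤ ℓ i) ∧
    (∀ i j : Fin n, (∑ t ∈ A i, u i t) + ℓ i ≥ (∑ t ∈ A j, u i t) + ℓ j) := by
  set w : Fin n → Fin n → ℝ := fun a b => (∑ s ∈ A b, u a s) - ∑ s ∈ A a, u a s
  have hloop : ∀ a, w a a ≤ 0 := fun a => (sub_self _).le
  refine ⟨fun i => (hℓ i).2 (WeightedDigraph.zero_mem_pathWeightsFrom (w := w) i), fun i j => ?_⟩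
  have hij := WeightedDigraph.add_le_of_isGreatest_pathWeightsFrom (w := w) hloop hNoPos hℓ i j
  simp only [w] at hij
  linarith

/-- If the envy graph of allocation `A` has no positive-weight directed cycle
and `ℓ i` is the maximum total weight of a directed (simple) path starting at `i` (the empty
path of weight `0` being allowed; a path is an injective `c : Fin (k+1) → Fin n` with
`c 0 = i`), then `ℓ i ≥ 0` for every `i` and the payments `p_i = ℓ i` make the allocation
envy-free with money. -/
theorem heaviest_path_payments_envy_free
    (n : ℕ) (I : Type) [Fintype I] [DecidableEq I]
    (u : Fin n → I → ℝ)
    (A : Fin n → Finset I)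
    (hA_disj : ∀ i j, i ≠ j → Disjoint (A i) (A j))
    (hA_cover : Finset.univ.biUnion A = Finset.univ)
    -- the envy graph has no positive-weight directed cycle
    (hNoPos : ∀ (k : ℕ), ∀ c : Fin (k + 2) → Fin n, Function.Injective c →
      (∑ t : Fin (k + 2),
        ((∑ s ∈ A (c (t + 1)), u (c t) s) - (∑ s ∈ A (c t), u (c t) s))) ≤ 0)
    -- ℓ i is the maximum weight of a directed path starting at i
    (ℓ : Fin n → ℝ)
    (hℓ : ∀ i : Fin n, IsGreatest
      {x : ℝ | ∃ (k : ℕ) (c : Fin (k + 1) → Fin n),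
        Function.Injective c ∧ c 0 = i ∧
        x = ∑ t : Fin k,
          ((∑ s ∈ A (c t.succ), u (c t.castSucc) s) -
            (∑ s ∈ A (c t.castSucc), u (c t.castSucc) s))}
      (ℓ i)) :
    (∀ i, 0 ≤ ℓ i) ∧
    (∀ i j : Fin n, (∑ t ∈ A i, u i t) + ℓ i ≥ (∑ t ∈ A j, u i t) + ℓ j) :=
  heaviest_path_payments_envy_free_general n I u A hNoPos ℓ hℓ
end

section
/- Let A = (A_1,…,A_n) be an allocation of the indivisible items M, suppose agent j's bundle A_j contains a meta-good M' ⊆ A_j that is good-minimal, and suppose agent i satisfies u_i(A_i) ≥ u_i(A_j \ M'). Then agent i is EF1 towards agent j: either u_i(A_i) ≥ u_i(A_j), or there exists an item g ∈ A_j with u_i(A_i) ≥ u_i(A_j \ {g}). -/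
/-- If agent `j`'s bundle contains a good-minimal meta-good `M'` and agent `i`
satisfies `u_i(A_i) ≥ u_i(A_j \ M')`, then agent `i` is EF1 towards agent `j`. -/
theorem good_minimal_implies_ef1
    (n : ℕ) (I : Type) [Fintype I] [DecidableEq I]
    (u : Fin n → I → ℝ)
    (A : Fin n → Finset I)
    (hA_disj : ∀ i j, i ≠ j → Disjoint (A i) (A j))
    (hA_cover : Finset.univ.biUnion A = Finset.univ)
    (i j : Fin n) (M' : Finset I)
    (hM'_sub : M' ⊆ A j)
    (hM'_ne : M'.Nonempty)
    -- M' is a meta-good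
    (hMeta : ∃ r : Fin n, 0 ≤ ∑ t ∈ M', u r t)
    -- M' is good-minimal
    (hGoodMin : ∀ (r : Fin n) (g : I), g ∈ M' → 0 ≤ u r g →
      (∑ t ∈ M'.erase g, u r t) ≤ 0)
    -- u_i(A_i) ≥ u_i(A_j \ M')
    (hyp : (∑ t ∈ A i, u i t) ≥ ∑ t ∈ A j \ M', u i t) :
    (∑ t ∈ A i, u i t) ≥ (∑ t ∈ A j, u i t) ∨
      ∃ g ∈ A j, (∑ t ∈ A i, u i t) ≥ ∑ t ∈ (A j).erase g, u i t := by
  have hsplit : (∑ t ∈ A j \ M', u i t) + (∑ t ∈ M', u i t) = ∑ t ∈ A j, u i t :=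
    Finset.sum_sdiff hM'_sub
  by_cases hle : (∑ t ∈ M', u i t) ≤ 0
  · left; linarith
  · push_neg at hle
    obtain ⟨g, hgM, hg⟩ : ∃ g ∈ M', 0 < u i g := by
      by_contra h
      push_neg at h
      have : (∑ t ∈ M', u i t) ≤ 0 := Finset.sum_nonpos h
      linarith
    have hmin := hGoodMin i g hgM hg.le
    have herase : (∑ t ∈ M'.erase g, u i t) + u i g = ∑ t ∈ M', u i t :=
      Finset.sum_erase_add _ _ hgM
    have hgAj : g ∈ A j := hM'_sub hgM
    have herase2 : (∑ t ∈ (A j).erase g, u i t) + u i g = ∑ t ∈ A j, u i t :=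
      Finset.sum_erase_add _ _ hgAj
    right
    exact ⟨g, hgAj, by linarith⟩
end

section
/- Suppose the item set M can be partitioned into nonempty sets M_1,…,M_ℓ such that each M_j is a meta-good, i.e., u_i(M_j) ≥ 0 for at least one agent i. Then there exists an allocation of M that is both EF1 and envy-freeable. -/
namespace EF1MetaB

open Finset

lemma refine_meta {n : ℕ} {I : Type} [DecidableEq I] (u : Fin n → I → ℝ) :
    ∀ S : Finset I, S.Nonempty → (∃ i, 0 ≤ ∑ t ∈ S, u i t) →
    ∃ D : Finset (Finset I),
      (∀ T ∈ D, T.Nonempty ∧ (∃ i, 0 ≤ ∑ t ∈ T, u i t) ∧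
        (∀ i, ∃ t ∈ T, ∑ s ∈ T.erase t, u i s ≤ 0)) ∧
      (∀ T ∈ D, ∀ T' ∈ D, T ≠ T' → Disjoint T T') ∧
      D.biUnion id = S := by
  intro S
  induction S using Finset.strongInduction with
  | _ S ih =>
    intro hne hmeta
    by_cases hP : ∀ i, ∃ t ∈ S, ∑ s ∈ S.erase t, u i s ≤ 0
    · refine ⟨{S}, ?_, ?_, by simp⟩
      · intro T hT
        rw [Finset.mem_singleton] at hT
        subst hT
        exact ⟨hne, hmeta, hP⟩
      · intro T hT T' hT' hTT'
        rw [Finset.mem_singleton] at hT hT'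
        exact absurd (hT.trans hT'.symm) hTT'
    · push_neg at hP
      obtain ⟨k, hk⟩ := hP
      obtain ⟨t0, ht0⟩ := hne
      have hpos0 : 0 < ∑ s ∈ S.erase t0, u k s := hk t0 ht0
      have hex : ∃ t ∈ S.erase t0, 0 < u k t := by
        by_contra h
        push_neg at h
        have : ∑ s ∈ S.erase t0, u k s ≤ 0 := Finset.sum_nonpos h
        linarith
      obtain ⟨ts, htsmem, htspos⟩ := hex
      have htsS : ts ∈ S := Finset.mem_of_mem_erase htsmem
      have hts0 : ts ≠ t0 := Finset.ne_of_mem_erase htsmem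
      have hS'ne : (S.erase ts).Nonempty := ⟨t0, Finset.mem_erase.2 ⟨hts0.symm, ht0⟩⟩
      have hmeta' : ∃ i, 0 ≤ ∑ t ∈ S.erase ts, u i t := ⟨k, (hk ts htsS).le⟩
      obtain ⟨D', hD'props, hD'disj, hD'union⟩ :=
        ih (S.erase ts) (Finset.erase_ssubset htsS) hS'ne hmeta'
      have hsubS' : ∀ T' ∈ D', T' ⊆ S.erase ts := by
        intro T' hT'
        rw [← hD'union]
        exact Finset.subset_biUnion_of_mem id hT'
      refine ⟨insert {ts} D', ?_, ?_, ?_⟩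
      · intro T hT
        rcases Finset.mem_insert.1 hT with rfl | hT
        · refine ⟨⟨ts, Finset.mem_singleton_self ts⟩, ⟨k, by simp [htspos.le]⟩, ?_⟩
          intro i
          exact ⟨ts, Finset.mem_singleton_self ts, by simp⟩
        · exact hD'props T hT
      · intro T hT T' hT' hTT'
        rcases Finset.mem_insert.1 hT with rfl | hT <;>
          rcases Finset.mem_insert.1 hT' with rfl | hT'
        · exact absurd rfl hTT'
        · have : ts ∉ T' := fun h => (Finset.mem_erase.1 (hsubS' T' hT' h)).1 rfl
          simpa [Finset.disjoint_singleton_left] using this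
        · have : ts ∉ T := fun h => (Finset.mem_erase.1 (hsubS' T hT h)).1 rfl
          simpa [Finset.disjoint_singleton_right] using this
        · exact hD'disj T hT T' hT' hTT'
      · rw [Finset.biUnion_insert, hD'union]
        simp only [id]
        rw [← Finset.insert_eq, Finset.insert_erase htsS]

lemma exists_assignment (n m : ℕ) (hn : 0 < n) (v : Fin n → Fin m → ℝ)
    (hmeta : ∀ c, ∃ i, 0 ≤ v i c) :
    ∃ f : Fin m → Fin n,
      (∀ c, 0 ≤ v (f c) c) ∧
      (∀ τ : Fin n → Fin n, Function.Injective τ →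
        ∑ c, v (τ (f c)) c ≤ ∑ c, v (f c) c) ∧
      (∀ (i j : Fin n) (Q : Finset (Fin m)), (∀ c ∈ Q, f c = j ∧ 0 < v i c) →
        Q.Nonempty →
        ∃ c0 ∈ Q, ∑ c ∈ Q.erase c0, v i c
          ≤ ∑ c ∈ Finset.univ.filter (fun c => f c = i), v i c) := by
  classical
  -- slots: agent × round, rounds in Fin (m+1)
  set a0 : Fin n := ⟨0, hn⟩ with ha0
  set g : (Fin m → Fin n × Fin (m+1)) → ℕ → Fin m → ℝ :=
    fun φ r c => if ((φ c).2 : ℕ) = r then v (φ c).1 c else 0 with hg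
  set W : (Fin m → Fin n × Fin (m+1)) → ℕ → ℝ := fun φ r => ∑ c, g φ r c with hW
  set S : ℕ → Finset (Fin m → Fin n × Fin (m+1)) := fun r => Nat.rec
    (Finset.univ.filter fun φ => Function.Injective φ)
    (fun r Sr => Sr.filter fun φ => ∀ ψ ∈ Sr, W ψ r ≤ W φ r) r with hS
  have hS0 : S 0 = Finset.univ.filter (fun φ => Function.Injective φ) := rfl
  have hSsucc : ∀ r, S (r + 1) = (S r).filter (fun φ => ∀ ψ ∈ S r, W ψ r ≤ W φ r) :=
    fun _ => rfl
  have hSne : ∀ r, (S r).Nonempty := by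
    intro r
    induction r with
    | zero =>
      refine ⟨fun c => (a0, c.castSucc), ?_⟩
      rw [hS0, Finset.mem_filter]
      refine ⟨Finset.mem_univ _, fun x y hxy => ?_⟩
      have : (x.castSucc : Fin (m+1)) = y.castSucc := congrArg Prod.snd hxy
      exact Fin.castSucc_injective m this
    | succ r ih =>
      obtain ⟨φmax, hmem, hmax⟩ := Finset.exists_max_image (S r) (fun ψ => W ψ r) ih
      exact ⟨φmax, by rw [hSsucc]; exact Finset.mem_filter.2 ⟨hmem, hmax⟩⟩
  have hchain : ∀ r r', r ≤ r' → S r' ⊆ S r := by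
    intro r r' h
    induction r' with
    | zero =>
      have : r = 0 := Nat.le_zero.1 h
      subst this; exact fun x hx => hx
    | succ r' ih =>
      rcases Nat.lt_or_ge r (r' + 1) with h1 | h1
      · intro φ hφ
        exact ih (by omega) ((hSsucc r' ▸ Finset.filter_subset _ _) hφ)
      · have : r = r' + 1 := le_antisymm h h1
        subst this; exact fun x hx => hx
  obtain ⟨φ, hφmem⟩ := hSne (m + 1)
  have φmem : ∀ r, r ≤ m + 1 → φ ∈ S r := fun r hr => hchain r (m + 1) hr hφmem
  have hφinj : Function.Injective φ := (Finset.mem_filter.1 (φmem 0 (by omega))).2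
  -- lexicographic maximality
  have hlex : ∀ ψ : Fin m → Fin n × Fin (m+1), Function.Injective ψ → ∀ r, r ≤ m →
      (∀ ρ, ρ < r → W ψ ρ = W φ ρ) → W ψ r ≤ W φ r := by
    intro ψ hψ r hrm hagree
    have hmemS : ∀ ρ, ρ ≤ r → ψ ∈ S ρ := by
      intro ρ hρ
      induction ρ with
      | zero => rw [hS0]; exact Finset.mem_filter.2 ⟨Finset.mem_univ _, hψ⟩
      | succ ρ ihρ =>
        have h1 : ψ ∈ S ρ := ihρ (by omega)
        have hφρ := Finset.mem_filter.1 (hSsucc ρ ▸ φmem (ρ + 1) (by omega))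
        rw [hSsucc]
        refine Finset.mem_filter.2 ⟨h1, fun χ hχ => ?_⟩
        calc W χ ρ ≤ W φ ρ := hφρ.2 χ hχ
          _ = W ψ ρ := (hagree ρ (by omega)).symm
    have hφr1 := Finset.mem_filter.1 (hSsucc r ▸ φmem (r + 1) (by omega))
    exact hφr1.2 ψ (hmemS r le_rfl)
  -- sum difference helpers
  have hWdiff1 : ∀ (ψ χ : Fin m → Fin n × Fin (m+1)) (c1 : Fin m),
      (∀ c, c ≠ c1 → ψ c = χ c) → ∀ r, W ψ r = W χ r + (g ψ r c1 - g χ r c1) := by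
    intro ψ χ c1 hag r
    rw [hW]
    simp only
    rw [← Finset.add_sum_erase _ (g ψ r) (Finset.mem_univ c1),
        ← Finset.add_sum_erase _ (g χ r) (Finset.mem_univ c1)]
    have : ∑ c ∈ Finset.univ.erase c1, g ψ r c = ∑ c ∈ Finset.univ.erase c1, g χ r c := by
      refine Finset.sum_congr rfl fun c hc => ?_
      rw [hg]; simp only [hag c (Finset.ne_of_mem_erase hc)]
    rw [this]; ring
  have hWdiff2 : ∀ (ψ χ : Fin m → Fin n × Fin (m+1)) (c1 c2 : Fin m), c1 ≠ c2 →
      (∀ c, c ≠ c1 → c ≠ c2 → ψ c = χ c) → ∀ r,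
      W ψ r = W χ r + (g ψ r c1 - g χ r c1) + (g ψ r c2 - g χ r c2) := by
    intro ψ χ c1 c2 h12 hag r
    rw [hW]
    simp only
    have h2mem : c2 ∈ Finset.univ.erase c1 := Finset.mem_erase.2 ⟨Ne.symm h12, Finset.mem_univ _⟩
    rw [← Finset.add_sum_erase _ (g ψ r) (Finset.mem_univ c1),
        ← Finset.add_sum_erase _ (g χ r) (Finset.mem_univ c1),
        ← Finset.add_sum_erase _ (g ψ r) h2mem,
        ← Finset.add_sum_erase _ (g χ r) h2mem]
    have : ∑ c ∈ (Finset.univ.erase c1).erase c2, g ψ r c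
        = ∑ c ∈ (Finset.univ.erase c1).erase c2, g χ r c := by
      refine Finset.sum_congr rfl fun c hc => ?_
      rw [hg]
      simp only [hag c (Finset.ne_of_mem_erase (Finset.mem_of_mem_erase hc))
        (Finset.ne_of_mem_erase hc)]
    rw [this]; ring
  have hgval : ∀ ψ r c, g ψ r c = if ((ψ c).2 : ℕ) = r then v (ψ c).1 c else 0 := fun _ _ _ => rfl
  have hsndle : ∀ c, ((φ c).2 : ℕ) ≤ m := fun c => Fin.is_le _
  -- F1 : every owner values own cell nonnegatively
  have hF1 : ∀ c, 0 ≤ v (φ c).1 c := by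
    intro c
    by_contra hneg
    push_neg at hneg
    obtain ⟨k, hk⟩ := hmeta c
    have hex : ∃ rs : Fin (m+1), ∀ e, (φ e).2 ≠ rs := by
      by_contra h
      push_neg at h
      have hsurj : Function.Surjective (fun e => (φ e).2) := fun r => h r
      have := Fintype.card_le_of_surjective _ hsurj
      simp only [Fintype.card_fin] at this
      omega
    obtain ⟨rs, hrs⟩ := hex
    set ψ : Fin m → Fin n × Fin (m+1) := Function.update φ c (k, rs) with hψ
    have hψc : ψ c = (k, rs) := Function.update_self _ _ _
    have hψe : ∀ e, e ≠ c → ψ e = φ e := fun e he => Function.update_of_ne he _ _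
    have hψinj : Function.Injective ψ := by
      intro x y hxy
      by_cases hx : x = c <;> by_cases hy : y = c
      · rw [hx, hy]
      · subst hx
        rw [hψc, hψe y hy] at hxy
        exact absurd (congrArg Prod.snd hxy.symm) (hrs y)
      · subst hy
        rw [hψc, hψe x hx] at hxy
        exact absurd (congrArg Prod.snd hxy) (hrs x)
      · rw [hψe x hx, hψe y hy] at hxy
        exact hφinj hxy
    have hdiff := hWdiff1 ψ φ c hψe
    have hgψ : ∀ r, g ψ r c = if (rs : ℕ) = r then v k c else 0 := by
      intro r; rw [hgval, hψc]
    have hgφ : ∀ r, g φ r c = if ((φ c).2 : ℕ) = r then v (φ c).1 c else 0 := fun r => hgval _ _ _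
    have hrsne : ((φ c).2 : ℕ) ≠ (rs : ℕ) := fun h => hrs c (Fin.val_injective h)
    rcases Nat.lt_or_ge ((φ c).2 : ℕ) (rs : ℕ) with hcase | hcase
    · -- own round before empty round : improve at own round
      have hagree : ∀ ρ, ρ < ((φ c).2 : ℕ) → W ψ ρ = W φ ρ := by
        intro ρ hρ
        rw [hdiff ρ, hgψ, hgφ, if_neg (by omega), if_neg (by omega)]
        ring
      have hlexc := hlex ψ hψinj ((φ c).2 : ℕ) (hsndle c) hagree
      rw [hdiff, hgψ, hgφ, if_neg (by omega), if_pos rfl] at hlexc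
      linarith
    · have hcase' : (rs : ℕ) < ((φ c).2 : ℕ) := by omega
      rcases lt_or_eq_of_le hk with hkpos | hkzero
      · -- strictly improve at empty round
        have hagree : ∀ ρ, ρ < (rs : ℕ) → W ψ ρ = W φ ρ := by
          intro ρ hρ
          rw [hdiff ρ, hgψ, hgφ, if_neg (by omega), if_neg (by omega)]
          ring
        have hlexc := hlex ψ hψinj (rs : ℕ) (Fin.is_le _) hagree
        rw [hdiff, hgψ, hgφ, if_pos rfl, if_neg (by omega)] at hlexc
        linarith
      · -- v k c = 0 : improve at own round
        have hagree : ∀ ρ, ρ < ((φ c).2 : ℕ) → W ψ ρ = W φ ρ := by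
          intro ρ hρ
          rw [hdiff ρ, hgψ, hgφ]
          by_cases hρrs : (rs : ℕ) = ρ
          · rw [if_pos hρrs, if_neg (by omega), ← hkzero]; ring
          · rw [if_neg hρrs, if_neg (by omega)]; ring
        have hlexc := hlex ψ hψinj ((φ c).2 : ℕ) (hsndle c) hagree
        rw [hdiff, hgψ, hgφ, if_neg (by omega), if_pos rfl] at hlexc
        linarith
  -- F2 occupied : earlier matched cells dominate later cells
  have hF2occ : ∀ (c' e : Fin m) (i : Fin n), (φ e).1 = i →
      ((φ e).2 : ℕ) < ((φ c').2 : ℕ) → v i c' ≤ v i e := by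
    intro c' e i hie hlt
    have hne' : e ≠ c' := by
      intro h; rw [h] at hlt; omega
    set ψ : Fin m → Fin n × Fin (m+1) := fun x => φ (Equiv.swap e c' x) with hψ
    have hψinj : Function.Injective ψ := hφinj.comp (Equiv.swap e c').injective
    have hψe : ψ e = φ c' := by rw [hψ]; simp [Equiv.swap_apply_left]
    have hψc' : ψ c' = φ e := by rw [hψ]; simp [Equiv.swap_apply_right]
    have hψo : ∀ x, x ≠ e → x ≠ c' → ψ x = φ x := by
      intro x hx1 hx2
      rw [hψ]; simp [Equiv.swap_apply_of_ne_of_ne hx1 hx2]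
    have hdiff := hWdiff2 ψ φ e c' hne' hψo
    have hagree : ∀ ρ, ρ < ((φ e).2 : ℕ) → W ψ ρ = W φ ρ := by
      intro ρ hρ
      rw [hdiff ρ, hgval, hgval, hgval, hgval, hψe, hψc']
      rw [if_neg (by omega), if_neg (by omega), if_neg (by omega), if_neg (by omega)]
      ring
    have hlexc := hlex ψ hψinj ((φ e).2 : ℕ) (hsndle e) hagree
    rw [hdiff, hgval, hgval, hgval, hgval, hψe, hψc'] at hlexc
    rw [if_neg (by omega), if_pos rfl, if_pos rfl, if_neg (by omega)] at hlexc
    rw [hie] at hlexc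
    linarith
  -- F2 unoccupied : cells after a free slot for agent i are worthless to i
  have hF2un : ∀ (c' : Fin m) (i : Fin n) (r : Fin (m+1)), (∀ e, φ e ≠ (i, r)) →
      (r : ℕ) < ((φ c').2 : ℕ) → v i c' ≤ 0 := by
    intro c' i r hfree hlt
    set ψ : Fin m → Fin n × Fin (m+1) := Function.update φ c' (i, r) with hψ
    have hψc : ψ c' = (i, r) := Function.update_self _ _ _
    have hψe : ∀ e, e ≠ c' → ψ e = φ e := fun e he => Function.update_of_ne he _ _
    have hψinj : Function.Injective ψ := by
      intro x y hxy
      by_cases hx : x = c' <;> by_cases hy : y = c'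
      · rw [hx, hy]
      · subst hx
        rw [hψc, hψe y hy] at hxy
        exact absurd hxy.symm (hfree y)
      · subst hy
        rw [hψc, hψe x hx] at hxy
        exact absurd hxy (hfree x)
      · rw [hψe x hx, hψe y hy] at hxy
        exact hφinj hxy
    have hdiff := hWdiff1 ψ φ c' hψe
    have hgψc : ∀ ρ, g ψ ρ c' = if (r : ℕ) = ρ then v i c' else 0 := by
      intro ρ; rw [hgval, hψc]
    have hagree : ∀ ρ, ρ < (r : ℕ) → W ψ ρ = W φ ρ := by
      intro ρ hρ
      rw [hdiff ρ, hgψc, hgval]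
      rw [if_neg (by omega), if_neg (by omega)]
      ring
    have hlexc := hlex ψ hψinj (r : ℕ) (Fin.is_le _) hagree
    rw [hdiff, hgψc, hgval, if_pos rfl, if_neg (by omega)] at hlexc
    linarith
  -- F3 : injective relabelling of agents cannot increase welfare
  have hF3 : ∀ τ : Fin n → Fin n, Function.Injective τ →
      ∑ c, v (τ (φ c).1) c ≤ ∑ c, v (φ c).1 c := by
    intro τ hτ
    have hround : ∀ r, r ≤ m →
        (∑ c, if ((φ c).2 : ℕ) = r then v (τ (φ c).1) c else 0) ≤ W φ r := by
      intro r hr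
      set ψ : Fin m → Fin n × Fin (m+1) :=
        fun c => if ((φ c).2 : ℕ) = r then (τ (φ c).1, (φ c).2) else φ c with hψ
      have hψsnd : ∀ c, (ψ c).2 = (φ c).2 := by
        intro c; rw [hψ]
        by_cases h : ((φ c).2 : ℕ) = r <;> simp [h]
      have hψinj : Function.Injective ψ := by
        intro x y hxy
        have hsnd : (φ x).2 = (φ y).2 := by
          rw [← hψsnd x, ← hψsnd y, hxy]
        by_cases hx : ((φ x).2 : ℕ) = r <;> by_cases hy : ((φ y).2 : ℕ) = r
        · apply hφinj
          rw [hψ] at hxy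
          simp only [if_pos hx, if_pos hy] at hxy
          have : τ (φ x).1 = τ (φ y).1 := congrArg Prod.fst hxy
          exact Prod.ext (hτ this) hsnd
        · exact absurd (hsnd ▸ hx) hy
        · exact absurd (hsnd.symm ▸ hy) hx
        · apply hφinj
          rw [hψ] at hxy
          simpa only [if_neg hx, if_neg hy] using hxy
      have hWeq : ∀ ρ, ρ ≠ r → W ψ ρ = W φ ρ := by
        intro ρ hρ
        refine Finset.sum_congr rfl fun c _ => ?_
        rw [hgval, hgval, hψsnd]
        by_cases h : ((φ c).2 : ℕ) = ρ
        · rw [if_pos h, if_pos h]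
          have hcr : ¬ ((φ c).2 : ℕ) = r := by omega
          rw [hψ]; simp [hcr]
        · rw [if_neg h, if_neg h]
      have hlexr := hlex ψ hψinj r hr (fun ρ hρ => hWeq ρ (by omega))
      have hWψr : W ψ r = ∑ c, if ((φ c).2 : ℕ) = r then v (τ (φ c).1) c else 0 := by
        refine Finset.sum_congr rfl fun c _ => ?_
        rw [hgval, hψsnd]
        by_cases h : ((φ c).2 : ℕ) = r
        · rw [if_pos h, if_pos h, hψ]; simp [h]
        · rw [if_neg h, if_neg h]
      linarith
    have hid : ∀ (fvec : Fin m → ℝ),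
        (∑ c, fvec c) = ∑ r ∈ Finset.range (m+1), ∑ c, if ((φ c).2 : ℕ) = r then fvec c else 0 := by
      intro fvec
      rw [Finset.sum_comm]
      refine Finset.sum_congr rfl fun c _ => ?_
      rw [Finset.sum_ite_eq (Finset.range (m+1)) ((φ c).2 : ℕ) (fun _ => fvec c)]
      rw [if_pos (Finset.mem_range.2 (by have := hsndle c; omega))]
    have h1 := hid (fun c => v (τ (φ c).1) c)
    have h2 := hid (fun c => v (φ c).1 c)
    rw [h1, h2]
    refine Finset.sum_le_sum fun r hr => ?_
    exact hround r (by have := Finset.mem_range.1 hr; omega)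
  -- conclusion
  refine ⟨fun c => (φ c).1, hF1, hF3, ?_⟩
  intro i j Q hQ hQne
  obtain ⟨c0, hc0Q, hc0min⟩ := Finset.exists_min_image Q (fun c => ((φ c).2 : ℕ)) hQne
  refine ⟨c0, hc0Q, ?_⟩
  have hdistinct : ∀ c ∈ Q, ∀ c' ∈ Q, c ≠ c' → ((φ c).2 : ℕ) ≠ ((φ c').2 : ℕ) := by
    intro c hc c' hc' hne heq
    apply hne
    apply hφinj
    exact Prod.ext ((hQ c hc).1.trans (hQ c' hc').1.symm) (Fin.val_injective heq)
  have hBIpos : ∀ e ∈ Finset.univ.filter (fun e => (φ e).1 = i), 0 ≤ v i e := by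
    intro e he
    have h1 := hF1 e
    rwa [(Finset.mem_filter.1 he).2] at h1
  have main : ∀ (N : ℕ) (Q' : Finset (Fin m)), Q' ⊆ Q → Q'.card ≤ N →
      ∀ c0' ∈ Q', (∀ c ∈ Q', ((φ c0').2 : ℕ) ≤ ((φ c).2 : ℕ)) →
      ∑ c ∈ Q'.erase c0', v i c
        ≤ ∑ e ∈ Finset.univ.filter
            (fun e => (φ e).1 = i ∧ ((φ e).2 : ℕ) < Q'.sup (fun c => ((φ c).2 : ℕ))), v i e := by
    intro N
    induction N with
    | zero =>
      intro Q' _ hcard c0' hc0' _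
      rw [Finset.card_eq_zero.1 (Nat.le_zero.1 hcard)] at hc0'
      exact absurd hc0' (Finset.notMem_empty c0')
    | succ N ihN =>
      intro Q' hQ'sub hcard c0' hc0' hmin
      by_cases hsingle : Q' = {c0'}
      · rw [hsingle, Finset.erase_singleton, Finset.sum_empty]
        refine Finset.sum_nonneg fun e he => ?_
        have h1 := hF1 e
        rwa [(Finset.mem_filter.1 he).2.1] at h1
      · have hexb : ∃ b ∈ Q', b ≠ c0' := by
          by_contra h
          push_neg at h
          exact hsingle (Finset.eq_singleton_iff_unique_mem.2 ⟨hc0', h⟩)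
        obtain ⟨b, hbQ', hbne⟩ := hexb
        obtain ⟨cmax, hcmaxQ', hcmax⟩ :=
          Finset.exists_max_image Q' (fun c => ((φ c).2 : ℕ)) ⟨c0', hc0'⟩
        have hc0b : ((φ c0').2 : ℕ) < ((φ b).2 : ℕ) :=
          lt_of_le_of_ne (hmin b hbQ')
            (hdistinct c0' (hQ'sub hc0') b (hQ'sub hbQ') (Ne.symm hbne))
        have hc0maxlt : ((φ c0').2 : ℕ) < ((φ cmax).2 : ℕ) :=
          lt_of_lt_of_le hc0b (hcmax b hbQ')
        have hc0max : c0' ≠ cmax := fun h => by rw [h] at hc0maxlt; omega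
        set Q'' := Q'.erase cmax with hQ''
        have hc0Q'' : c0' ∈ Q'' := Finset.mem_erase.2 ⟨hc0max, hc0'⟩
        obtain ⟨cm2, hcm2, hcm2max⟩ :=
          Finset.exists_max_image Q'' (fun c => ((φ c).2 : ℕ)) ⟨c0', hc0Q''⟩
        have hcm2Q' : cm2 ∈ Q' := Finset.mem_of_mem_erase hcm2
        have hcm2lt : ((φ cm2).2 : ℕ) < ((φ cmax).2 : ℕ) :=
          lt_of_le_of_ne (hcmax cm2 hcm2Q')
            (hdistinct cm2 (hQ'sub hcm2Q') cmax (hQ'sub hcmaxQ') (Finset.ne_of_mem_erase hcm2))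
        have hvmaxpos : 0 < v i cmax := (hQ cmax (hQ'sub hcmaxQ')).2
        have hocc : ∃ e, φ e = (i, (φ cm2).2) := by
          by_contra h
          push_neg at h
          have := hF2un cmax i (φ cm2).2 h hcm2lt
          linarith
        obtain ⟨estar, hestar⟩ := hocc
        have heagent : (φ estar).1 = i := by rw [hestar]
        have heround : ((φ estar).2 : ℕ) = ((φ cm2).2 : ℕ) := by rw [hestar]
        have hvle : v i cmax ≤ v i estar :=
          hF2occ cmax estar i heagent (by rw [heround]; exact hcm2lt)
        have hsup'' : Q''.sup (fun c => ((φ c).2 : ℕ)) = ((φ cm2).2 : ℕ) :=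
          le_antisymm (Finset.sup_le fun c hc => hcm2max c hc)
            (Finset.le_sup (f := fun c => ((φ c).2 : ℕ)) hcm2)
        have hsup' : Q'.sup (fun c => ((φ c).2 : ℕ)) = ((φ cmax).2 : ℕ) :=
          le_antisymm (Finset.sup_le fun c hc => hcmax c hc)
            (Finset.le_sup (f := fun c => ((φ c).2 : ℕ)) hcmaxQ')
        have hcard'' : Q''.card ≤ N := by
          rw [hQ'', Finset.card_erase_of_mem hcmaxQ']
          omega
        have hih := ihN Q'' (Finset.Subset.trans (Finset.erase_subset _ _) hQ'sub) hcard''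
          c0' hc0Q'' (fun c hc => hmin c (Finset.mem_of_mem_erase hc))
        rw [hsup''] at hih
        have hsplit : ∑ c ∈ Q'.erase c0', v i c = v i cmax + ∑ c ∈ Q''.erase c0', v i c := by
          have hcm : cmax ∈ Q'.erase c0' := Finset.mem_erase.2 ⟨Ne.symm hc0max, hcmaxQ'⟩
          rw [← Finset.add_sum_erase _ _ hcm]
          congr 1
          rw [hQ'', Finset.erase_right_comm]
        set F2 := Finset.univ.filter
          (fun e => (φ e).1 = i ∧ ((φ e).2 : ℕ) < ((φ cm2).2 : ℕ)) with hF2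
        have hestarF2 : estar ∉ F2 := by
          rw [hF2]
          simp only [Finset.mem_filter, not_and]
          intro _ h
          omega
        have hinsert : ∑ e ∈ F2, v i e + v i estar = ∑ e ∈ insert estar F2, v i e := by
          rw [Finset.sum_insert hestarF2]; ring
        have hsubF : insert estar F2 ⊆ Finset.univ.filter
            (fun e => (φ e).1 = i ∧ ((φ e).2 : ℕ) < Q'.sup (fun c => ((φ c).2 : ℕ))) := by
          intro x hx
          rcases Finset.mem_insert.1 hx with rfl | hx
          · refine Finset.mem_filter.2 ⟨Finset.mem_univ _, heagent, ?_⟩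
            rw [hsup', heround]
            exact hcm2lt
          · have h1 := Finset.mem_filter.1 hx
            refine Finset.mem_filter.2 ⟨Finset.mem_univ _, h1.2.1, ?_⟩
            rw [hsup']
            have := h1.2.2
            omega
        have hlast : ∑ e ∈ insert estar F2, v i e ≤ ∑ e ∈ Finset.univ.filter
            (fun e => (φ e).1 = i ∧ ((φ e).2 : ℕ) < Q'.sup (fun c => ((φ c).2 : ℕ))), v i e := by
          refine Finset.sum_le_sum_of_subset_of_nonneg hsubF fun e he _ => ?_
          have h1 := hF1 e
          rwa [(Finset.mem_filter.1 he).2.1] at h1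
        rw [hsplit]
        calc v i cmax + ∑ c ∈ Q''.erase c0', v i c
            ≤ v i estar + ∑ e ∈ F2, v i e := by linarith
          _ = ∑ e ∈ insert estar F2, v i e := by linarith
          _ ≤ _ := hlast
  have hmain := main Q.card Q Finset.Subset.rfl le_rfl c0 hc0Q hc0min
  calc ∑ c ∈ Q.erase c0, v i c
      ≤ ∑ e ∈ Finset.univ.filter
          (fun e => (φ e).1 = i ∧ ((φ e).2 : ℕ) < Q.sup (fun c => ((φ c).2 : ℕ))), v i e := hmain
    _ ≤ ∑ c ∈ Finset.univ.filter (fun c => (φ c).1 = i), v i c := by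
        refine Finset.sum_le_sum_of_subset_of_nonneg ?_ fun e he _ => hBIpos e he
        intro x hx
        have h1 := Finset.mem_filter.1 hx
        exact Finset.mem_filter.2 ⟨Finset.mem_univ _, h1.2.1⟩


end EF1MetaB


namespace EF1Meta

open Finset

variable {α : Type*}

/-- weight of a walk -/
def ww (w : α → α → ℝ) : List α → ℝ
  | [] => 0
  | [_] => 0
  | a :: b :: t => w a b + ww w (b :: t)

lemma ww_cons_cons (w : α → α → ℝ) (a b : α) (t : List α) :
    ww w (a :: b :: t) = w a b + ww w (b :: t) := rfl

lemma ww_append_last (w : α → α → ℝ) : ∀ (x : List α) (hx : x ≠ []) (c : α),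
    ww w (x ++ [c]) = ww w x + w (x.getLast hx) c
  | [], hx, _ => absurd rfl hx
  | [a], _, c => by simp [ww]
  | a :: b :: t, _, c => by
    have ih := ww_append_last w (b :: t) (by simp) c
    simp only [List.cons_append] at *
    rw [ww_cons_cons, ww_cons_cons, ih, List.getLast_cons (by simp : b :: t ≠ [])]
    ring

lemma ww_split (w : α → α → ℝ) : ∀ (x : List α) (c : α) (y : List α),
    ww w (x ++ c :: y) = ww w (x ++ [c]) + ww w (c :: y)
  | [], c, y => by simp [ww]
  | [a], c, y => by simp [ww_cons_cons, ww]
  | a :: b :: t, c, y => by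
    have ih := ww_split w (b :: t) c y
    simp only [List.cons_append] at *
    rw [ww_cons_cons, ww_cons_cons, ih]
    ring

lemma exists_dup : ∀ (L : List α), ¬ L.Nodup →
    ∃ (l1 : List α) (b : α) (l2 l3 : List α), L = l1 ++ b :: l2 ++ b :: l3
  | [], h => absurd List.nodup_nil h
  | x :: xs, h => by
    by_cases hx : x ∈ xs
    · obtain ⟨s, t, rfl⟩ := List.append_of_mem hx
      exact ⟨[], x, s, t, by simp⟩
    · have : ¬ xs.Nodup := fun hnd => h (List.nodup_cons.2 ⟨hx, hnd⟩)
      obtain ⟨l1, b, l2, l3, rfl⟩ := exists_dup xs this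
      exact ⟨x :: l1, b, l2, l3, by simp⟩

lemma exists_dup_nodup_mid (L : List α) (h : ¬ L.Nodup) :
    ∃ (l1 : List α) (b : α) (l2 l3 : List α),
      L = l1 ++ b :: l2 ++ b :: l3 ∧ (b :: l2).Nodup := by
  obtain ⟨l1, b, l2, l3, hL⟩ := exists_dup L h
  clear h
  -- shrink: strong induction on l2.length
  have main : ∀ (k : ℕ) (l1 : List α) (b : α) (l2 l3 : List α), l2.length ≤ k →
      L = l1 ++ b :: l2 ++ b :: l3 →
      ∃ (m1 : List α) (c : α) (m2 m3 : List α),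
        L = m1 ++ c :: m2 ++ c :: m3 ∧ (c :: m2).Nodup := by
    intro k
    induction k with
    | zero =>
      intro l1 b l2 l3 hlen hL
      refine ⟨l1, b, l2, l3, hL, ?_⟩
      rw [List.length_eq_zero_iff.1 (Nat.le_zero.1 hlen)]
      simp
    | succ k ih =>
      intro l1 b l2 l3 hlen hL
      by_cases hnd : (b :: l2).Nodup
      · exact ⟨l1, b, l2, l3, hL, hnd⟩
      · obtain ⟨y1, c, y2, y3, hy⟩ := exists_dup _ hnd
        have hlen2 : y2.length ≤ k := by
          have := congrArg List.length hy
          simp only [List.length_cons, List.length_append] at this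
          omega
        refine ih (l1 ++ y1) c y2 (y3 ++ b :: l3) hlen2 ?_
        rw [hL, hy]
        simp
  exact main l2.length l1 b l2 l3 le_rfl hL

variable [DecidableEq α] [Fintype α]

lemma formPerm_sum (w : α → α → ℝ) :
    ∀ (t : List α) (a : α), (a :: t).Nodup →
      ∑ j ∈ (a :: t).toFinset, w j ((a :: t).formPerm j)
        = ww w (a :: t) + w ((a :: t).getLast (by simp)) a
  | [], a, _ => by simp [ww, List.formPerm_singleton]
  | b :: t', a, hnd => by
    have hnd' : (b :: t').Nodup := hnd.of_cons
    have ha : a ∉ (b :: t') := (List.nodup_cons.1 hnd).1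
    set τ := (b :: t').formPerm with hτ
    set σ := (a :: b :: t').formPerm with hσ
    have hσapp : ∀ j, σ j = Equiv.swap a b (τ j) := by
      intro j; rw [hσ, List.formPerm_cons_cons]; rfl
    set g := (b :: t').getLast (by simp) with hg
    have hgmem : g ∈ (b :: t') := List.getLast_mem _
    have hτg : τ g = b := List.formPerm_apply_getLast b t'
    have hσa : σ a = b := by
      rw [hσapp, List.formPerm_apply_of_notMem ha, Equiv.swap_apply_left]
    have hσg : σ g = a := by rw [hσapp, hτg, Equiv.swap_apply_right]
    have hσj : ∀ j ∈ (b :: t'), j ≠ g → σ j = τ j := by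
      intro j hj hjg
      have hτjmem : τ j ∈ (b :: t') := List.formPerm_apply_mem_of_mem hj
      have hτja : τ j ≠ a := fun h => ha (h ▸ hτjmem)
      have hτjb : τ j ≠ b := by
        intro h
        exact hjg (τ.injective (h.trans hτg.symm))
      rw [hσapp, Equiv.swap_apply_of_ne_of_ne hτja hτjb]
    have hamem : a ∉ (b :: t').toFinset := by simpa using ha
    have hsum1 : ∑ j ∈ (a :: b :: t').toFinset, w j (σ j)
        = w a (σ a) + ∑ j ∈ (b :: t').toFinset, w j (σ j) := by
      rw [List.toFinset_cons, Finset.sum_insert hamem]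
    have hgfin : g ∈ (b :: t').toFinset := by simpa using hgmem
    have hsum2 : ∑ j ∈ (b :: t').toFinset, w j (σ j)
        = w g a + ∑ j ∈ (b :: t').toFinset.erase g, w j (σ j) := by
      rw [← Finset.add_sum_erase _ _ hgfin, hσg]
    have hsum3 : ∑ j ∈ (b :: t').toFinset.erase g, w j (σ j)
        = ∑ j ∈ (b :: t').toFinset.erase g, w j (τ j) := by
      refine Finset.sum_congr rfl fun j hj => ?_
      have hj' := Finset.mem_of_mem_erase hj
      have hjg := Finset.ne_of_mem_erase hj
      rw [hσj j (by simpa using hj') hjg]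
    have hsum4 : ∑ j ∈ (b :: t').toFinset, w j (τ j)
        = w g b + ∑ j ∈ (b :: t').toFinset.erase g, w j (τ j) := by
      rw [← Finset.add_sum_erase _ _ hgfin, hτg]
    have ih := formPerm_sum w t' b hnd'
    have hgl : (a :: b :: t').getLast (by simp) = g :=
      List.getLast_cons (by simp)
    rw [hsum1, hσa, hsum2, hsum3, ww_cons_cons]
    have : ∑ j ∈ (b :: t').toFinset.erase g, w j (τ j)
        = ww w (b :: t') + w g b - w g b := by
      rw [← ih, hsum4]; ring
    rw [this, hgl]
    ring

lemma cycle_nonpos (w : α → α → ℝ) (hw : ∀ i, w i i = 0)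
    (hperm : ∀ σ : Equiv.Perm α, ∑ i, w i (σ i) ≤ 0)
    (a : α) (t : List α) (hnd : (a :: t).Nodup) :
    ww w ((a :: t) ++ [a]) ≤ 0 := by
  set σ := (a :: t).formPerm with hσ
  have h1 : ∑ i, w i (σ i) ≤ 0 := hperm σ
  have h2 : ∑ i, w i (σ i)
      = ∑ j ∈ (a :: t).toFinset, w j (σ j) := by
    rw [← Finset.sum_subset (Finset.subset_univ (a :: t).toFinset)]
    intro x _ hx
    rw [List.formPerm_apply_of_notMem (by simpa using hx), hw]
  have h3 := formPerm_sum w t a hnd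
  have h4 : ww w ((a :: t) ++ [a])
      = ww w (a :: t) + w ((a :: t).getLast (by simp)) a :=
    ww_append_last w (a :: t) (by simp) a
  rw [h4, ← h3, ← h2]
  exact h1

lemma exists_payments {n : ℕ} (hn : 0 < n) (w : Fin n → Fin n → ℝ)
    (hw : ∀ i, w i i = 0)
    (hperm : ∀ σ : Equiv.Perm (Fin n), ∑ i, w i (σ i) ≤ 0) :
    ∃ p : Fin n → ℝ, (∀ i, 0 ≤ p i) ∧ ∀ i j, w i j + p j ≤ p i := by
  have hne : (Finset.univ : Finset (Fin n)).Nonempty := ⟨⟨0, hn⟩, Finset.mem_univ _⟩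
  let q : ℕ → Fin n → ℝ := fun K => Nat.rec (fun _ => 0)
    (fun _ qK i => max (qK i) (Finset.univ.sup' hne (fun j => w i j + qK j))) K
  have hq0 : ∀ i, q 0 i = 0 := fun _ => rfl
  have hqs : ∀ K i, q (K + 1) i
      = max (q K i) (Finset.univ.sup' hne (fun j => w i j + q K j)) := fun _ _ => rfl
  have hmono : ∀ K i, q K i ≤ q (K + 1) i := by
    intro K i; rw [hqs]; exact le_max_left _ _
  have hnonneg : ∀ K i, 0 ≤ q K i := by
    intro K
    induction K with
    | zero => intro i; rw [hq0]
    | succ K ih => intro i; exact le_trans (ih i) (hmono K i)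
  -- β : walks of length ≤ K bounded by q K
  have hβ : ∀ (K : ℕ) (l : List (Fin n)) (i : Fin n), l.length ≤ K → ww w (i :: l) ≤ q K i := by
    intro K
    induction K with
    | zero =>
      intro l i hl
      rw [List.length_eq_zero_iff.1 (Nat.le_zero.1 hl), hq0]
      exact le_of_eq rfl
    | succ K ih =>
      intro l i hl
      match l with
      | [] =>
        have h0 : ww w [i] = 0 := rfl
        rw [h0]; exact hnonneg (K+1) i
      | j :: t =>
        rw [ww_cons_cons]
        have h1 : ww w (j :: t) ≤ q K j := ih t j (by simpa using hl)
        have h2 : w i j + q K j ≤ Finset.univ.sup' hne (fun j' => w i j' + q K j') :=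
          Finset.le_sup' (fun j' => w i j' + q K j') (Finset.mem_univ j)
        rw [hqs]
        exact le_max_of_le_right (le_trans (by linarith) h2)
  -- α : q K attained by a walk of length ≤ K
  have hα : ∀ (K : ℕ) (i : Fin n), ∃ l : List (Fin n), l.length ≤ K ∧ q K i = ww w (i :: l) := by
    intro K
    induction K with
    | zero => intro i; exact ⟨[], le_rfl, by rw [hq0]; rfl⟩
    | succ K ih =>
      intro i
      rcases le_or_gt (Finset.univ.sup' hne (fun j => w i j + q K j)) (q K i) with h | h
      · obtain ⟨l, hl, he⟩ := ih i
        exact ⟨l, le_trans hl (Nat.le_succ K), by rw [hqs, max_eq_left h]; exact he⟩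
      · obtain ⟨j, _, hj⟩ := Finset.exists_mem_eq_sup' hne (fun j => w i j + q K j)
        obtain ⟨l, hl, he⟩ := ih j
        refine ⟨j :: l, by simpa using Nat.succ_le_succ hl, ?_⟩
        rw [hqs, max_eq_right h.le, hj, ww_cons_cons, he]
  -- γ : all walks bounded by q n
  have hγk : ∀ (k : ℕ) (l : List (Fin n)), l.length ≤ k → ∀ i : Fin n, ww w (i :: l) ≤ q n i := by
    intro k
    induction k with
    | zero =>
      intro l hl i
      rw [List.length_eq_zero_iff.1 (Nat.le_zero.1 hl)]
      have h0 : ww w [i] = 0 := rfl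
      rw [h0]; exact hnonneg n i
    | succ k ihk =>
      intro l hl i
      by_cases hln : l.length ≤ n
      · exact hβ n l i hln
      · push_neg at hln
        have hnodup : ¬ (i :: l).Nodup := by
          intro hnd
          have := hnd.length_le_card
          simp only [List.length_cons, Fintype.card_fin] at this
          omega
        obtain ⟨m1, c, m2, m3, hdec, hndm⟩ := exists_dup_nodup_mid _ hnodup
        have hsplit1 : ww w (i :: l) = ww w (m1 ++ [c]) + ww w (c :: (m2 ++ c :: m3)) := by
          rw [hdec]
          have := ww_split w m1 c (m2 ++ c :: m3)
          simpa using this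
        have hsplit2 : ww w (c :: (m2 ++ c :: m3))
            = ww w ((c :: m2) ++ [c]) + ww w (c :: m3) := by
          have := ww_split w (c :: m2) c m3
          simpa using this
        have hcyc : ww w ((c :: m2) ++ [c]) ≤ 0 := cycle_nonpos w hw hperm c m2 hndm
        have hshort : ww w (i :: l) ≤ ww w (m1 ++ c :: m3) := by
          rw [hsplit1, hsplit2, ww_split w m1 c m3]
          linarith
        rcases m1 with _ | ⟨a, m1'⟩
        · simp only [List.nil_append] at hdec hshort
          injection hdec with h1 h2
          subst h1
          subst h2
          have hlen3 : m3.length ≤ k := by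
            simp only [List.append_eq, List.length_append, List.length_cons] at hl
            omega
          have hrec := ihk m3 hlen3 i
          linarith
        · simp only [List.cons_append, List.cons.injEq] at hdec
          obtain ⟨hia, hl'⟩ := hdec
          subst hia
          have hlen3 : (m1' ++ c :: m3).length ≤ k := by
            have := congrArg List.length hl'
            simp only [List.length_append, List.length_cons] at this
            simp only [List.length_append, List.length_cons]
            omega
          have hrec := ihk (m1' ++ c :: m3) hlen3 i
          have hww : (i :: m1') ++ c :: m3 = i :: (m1' ++ c :: m3) := by simp
          rw [hww] at hshort
          linarith
  refine ⟨q n, fun i => hnonneg n i, fun i j => ?_⟩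
  have h1 : w i j + q n j ≤ Finset.univ.sup' hne (fun j' => w i j' + q n j') :=
    Finset.le_sup' (fun j' => w i j' + q n j') (Finset.mem_univ j)
  have h2 : Finset.univ.sup' hne (fun j' => w i j' + q n j') ≤ q (n + 1) i := by
    rw [hqs]; exact le_max_right _ _
  have h3 : q (n + 1) i ≤ q n i := by
    obtain ⟨l, hl, he⟩ := hα (n + 1) i
    rw [he]
    exact hγk l.length l le_rfl i
  linarith

end EF1Meta


/-- Case II.1: If the item set can be partitioned into nonempty meta-goods
`M_1, …, M_ℓ` (each valued nonnegatively by at least one agent), then an EF1 and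
envy-freeable allocation of the items exists. -/
theorem ef1_envy_freeable_case_meta_goods
    (n : ℕ) (hn : 0 < n) (I : Type) [Fintype I] [DecidableEq I]
    (u : Fin n → I → ℝ)
    (ℓ : ℕ) (Ms : Fin ℓ → Finset I)
    -- the M_j partition the item set
    (hMs_disj : ∀ j k, j ≠ k → Disjoint (Ms j) (Ms k))
    (hcover : Finset.univ.biUnion Ms = Finset.univ)
    -- each M_j is a nonempty meta-good
    (hMs_ne : ∀ j, (Ms j).Nonempty)
    (hMs_meta : ∀ j, ∃ i : Fin n, 0 ≤ ∑ t ∈ Ms j, u i t) :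
    ∃ A : Fin n → Finset I,
      (∀ i j, i ≠ j → Disjoint (A i) (A j)) ∧
      (Finset.univ.biUnion A = Finset.univ) ∧
      -- EF1
      (∀ i j : Fin n,
        (∑ t ∈ A i, u i t) ≥ (∑ t ∈ A j, u i t) ∨
          ∃ t ∈ A i ∪ A j,
            (∑ s ∈ (A i).erase t, u i s) ≥ ∑ s ∈ (A j).erase t, u i s) ∧
      -- envy-freeable
      (∃ p : Fin n → ℝ, (∀ i, 0 ≤ p i) ∧
        ∀ i j : Fin n, (∑ t ∈ A i, u i t) + p i ≥ (∑ t ∈ A j, u i t) + p j) := by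
  classical
  -- refine each meta-good into nonempty meta-good cells with property P
  have hDj : ∀ j : Fin ℓ, ∃ D : Finset (Finset I),
      (∀ T ∈ D, T.Nonempty ∧ (∃ i, 0 ≤ ∑ t ∈ T, u i t) ∧
        (∀ i, ∃ t ∈ T, ∑ s ∈ T.erase t, u i s ≤ 0)) ∧
      (∀ T ∈ D, ∀ T' ∈ D, T ≠ T' → Disjoint T T') ∧
      D.biUnion id = Ms j :=
    fun j => EF1MetaB.refine_meta u (Ms j) (hMs_ne j) (hMs_meta j)
  choose D hDprops hDdisj hDunion using hDj
  set Dtot : Finset (Finset I) := Finset.univ.biUnion D with hDtot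
  have htotsub : ∀ j, ∀ T ∈ D j, T ⊆ Ms j := by
    intro j T hT
    rw [← hDunion j]
    exact Finset.subset_biUnion_of_mem id hT
  have htotprops : ∀ T ∈ Dtot, T.Nonempty ∧ (∃ i, 0 ≤ ∑ t ∈ T, u i t) ∧
      (∀ i, ∃ t ∈ T, ∑ s ∈ T.erase t, u i s ≤ 0) := by
    intro T hT
    obtain ⟨j, _, hTj⟩ := Finset.mem_biUnion.1 hT
    exact hDprops j T hTj
  have htotdisj : ∀ T ∈ Dtot, ∀ T' ∈ Dtot, T ≠ T' → Disjoint T T' := by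
    intro T hT T' hT' hne
    obtain ⟨j, _, hTj⟩ := Finset.mem_biUnion.1 hT
    obtain ⟨j', _, hTj'⟩ := Finset.mem_biUnion.1 hT'
    by_cases hjj : j = j'
    · subst hjj
      exact hDdisj j T hTj T' hTj' hne
    · exact (hMs_disj j j' hjj).mono (htotsub j T hTj) (htotsub j' T' hTj')
  have htotunion : Dtot.biUnion id = Finset.univ := by
    rw [hDtot, Finset.biUnion_biUnion]
    rw [← hcover]
    exact Finset.biUnion_congr rfl fun j _ => hDunion j
  -- enumerate the cells
  set m : ℕ := Dtot.card with hm
  set C : Fin m → Finset I := fun c => ((Dtot.equivFin.symm c : { x // x ∈ Dtot }) : Finset I)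
    with hC
  have hCmem : ∀ c, C c ∈ Dtot := fun c => (Dtot.equivFin.symm c).2
  have hCinj : Function.Injective C := by
    intro c c' h
    have : (Dtot.equivFin.symm c) = (Dtot.equivFin.symm c') := Subtype.ext h
    exact Dtot.equivFin.symm.injective this
  have hCdisj : ∀ c c', c ≠ c' → Disjoint (C c) (C c') := by
    intro c c' h
    exact htotdisj (C c) (hCmem c) (C c') (hCmem c') (fun hcc => h (hCinj hcc))
  have hCcover : ∀ t : I, ∃ c, t ∈ C c := by
    intro t
    have ht : t ∈ Dtot.biUnion id := htotunion ▸ Finset.mem_univ t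
    obtain ⟨T, hT, htT⟩ := Finset.mem_biUnion.1 ht
    refine ⟨Dtot.equivFin ⟨T, hT⟩, ?_⟩
    simpa [hC] using htT
  -- cell values
  set v : Fin n → Fin m → ℝ := fun i c => ∑ t ∈ C c, u i t with hv
  have hvmeta : ∀ c, ∃ i, 0 ≤ v i c := fun c => (htotprops (C c) (hCmem c)).2.1
  obtain ⟨f, hf1, hf3, hfQ⟩ := EF1MetaB.exists_assignment n m hn v hvmeta
  -- the allocation
  set A : Fin n → Finset I := fun i => (Finset.univ.filter (fun c => f c = i)).biUnion C
    with hA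
  have hmemA : ∀ (i : Fin n) (t : I), t ∈ A i ↔ ∃ c, f c = i ∧ t ∈ C c := by
    intro i t
    rw [hA]
    simp only [Finset.mem_biUnion, Finset.mem_filter, Finset.mem_univ, true_and]
  have hAdisj : ∀ i j, i ≠ j → Disjoint (A i) (A j) := by
    intro i j hij
    rw [Finset.disjoint_left]
    intro t hti htj
    obtain ⟨c, hc1, hc2⟩ := (hmemA i t).1 hti
    obtain ⟨c', hc'1, hc'2⟩ := (hmemA j t).1 htj
    have hne : c ≠ c' := fun h => hij (hc1 ▸ h ▸ hc'1)
    exact Finset.disjoint_left.1 (hCdisj c c' hne) hc2 hc'2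
  have hAsum : ∀ (i k : Fin n), ∑ t ∈ A k, u i t
      = ∑ c ∈ Finset.univ.filter (fun c => f c = k), v i c := by
    intro i k
    rw [hA]
    exact Finset.sum_biUnion (fun c _ c' _ hne => hCdisj c c' hne)
  have hAicover : Finset.univ.biUnion A = Finset.univ := by
    apply Finset.eq_univ_of_forall
    intro t
    obtain ⟨c, htc⟩ := hCcover t
    exact Finset.mem_biUnion.2 ⟨f c, Finset.mem_univ _, (hmemA (f c) t).2 ⟨c, rfl, htc⟩⟩
  have hAiNonneg : ∀ i, 0 ≤ ∑ t ∈ A i, u i t := by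
    intro i
    rw [hAsum]
    refine Finset.sum_nonneg fun c hc => ?_
    have h1 := hf1 c
    rwa [(Finset.mem_filter.1 hc).2] at h1
  refine ⟨A, hAdisj, hAicover, ?_, ?_⟩
  · -- EF1
    intro i j
    by_cases hij : i = j
    · subst hij; exact Or.inl le_rfl
    set Q : Finset (Fin m) := Finset.univ.filter (fun c => f c = j ∧ 0 < v i c) with hQdef
    rcases Q.eq_empty_or_nonempty with hQe | hQne
    · left
      have hAj : ∑ t ∈ A j, u i t ≤ 0 := by
        rw [hAsum]
        refine Finset.sum_nonpos fun c hc => ?_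
        have hc' := Finset.mem_filter.1 hc
        by_contra hpos
        push_neg at hpos
        have : c ∈ Q := by
          rw [hQdef]
          exact Finset.mem_filter.2 ⟨Finset.mem_univ _, hc'.2, hpos⟩
        rw [hQe] at this
        exact absurd this (Finset.notMem_empty c)
      exact le_trans hAj (hAiNonneg i)
    · right
      obtain ⟨c0, hc0Q, hc0sum⟩ := hfQ i j Q
        (fun c hc => (Finset.mem_filter.1 hc).2) hQne
      have hc0j : f c0 = j := (Finset.mem_filter.1 hc0Q).2.1
      obtain ⟨t, htC, htP⟩ := (htotprops (C c0) (hCmem c0)).2.2 i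
      have htAj : t ∈ A j := (hmemA j t).2 ⟨c0, hc0j, htC⟩
      have htAi : t ∉ A i := fun h => Finset.disjoint_left.1 (hAdisj i j hij) h htAj
      refine ⟨t, Finset.mem_union_right _ htAj, ?_⟩
      have hAit : (A i).erase t = A i := Finset.erase_eq_of_notMem htAi
      have hAjt : ∑ s ∈ (A j).erase t, u i s = ∑ t' ∈ A j, u i t' - u i t := by
        have := Finset.add_sum_erase (A j) (u i) htAj
        linarith
      have hCc0t : ∑ s ∈ (C c0).erase t, u i s = v i c0 - u i t := by
        have := Finset.add_sum_erase (C c0) (u i) htC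
        rw [hv]
        linarith
      set Bj : Finset (Fin m) := Finset.univ.filter (fun c => f c = j) with hBj
      have hc0Bj : c0 ∈ Bj := Finset.mem_filter.2 ⟨Finset.mem_univ _, hc0j⟩
      have hQsubBj : Q.erase c0 ⊆ Bj.erase c0 := by
        intro x hx
        have h1 := Finset.mem_erase.1 hx
        have h2 := Finset.mem_filter.1 h1.2
        exact Finset.mem_erase.2 ⟨h1.1, Finset.mem_filter.2 ⟨Finset.mem_univ _, h2.2.1⟩⟩
      have hBjsplit : ∑ c ∈ Bj.erase c0, v i c
          = ∑ c ∈ Bj.erase c0 \ Q.erase c0, v i c + ∑ c ∈ Q.erase c0, v i c :=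
        (Finset.sum_sdiff hQsubBj).symm
      have hrest : ∑ c ∈ Bj.erase c0 \ Q.erase c0, v i c ≤ 0 := by
        refine Finset.sum_nonpos fun c hc => ?_
        have h1 := Finset.mem_sdiff.1 hc
        have h2 := Finset.mem_erase.1 h1.1
        have h3 := Finset.mem_filter.1 h2.2
        by_contra hpos
        push_neg at hpos
        refine h1.2 (Finset.mem_erase.2 ⟨h2.1, ?_⟩)
        rw [hQdef]
        exact Finset.mem_filter.2 ⟨Finset.mem_univ _, h3.2, hpos⟩
      have hBjsum : ∑ t' ∈ A j, u i t' = ∑ c ∈ Bj.erase c0, v i c + v i c0 := by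
        rw [hAsum i j, ← Finset.sum_erase_add Bj _ hc0Bj]
      have hAisum : ∑ t' ∈ A i, u i t'
          = ∑ c ∈ Finset.univ.filter (fun c => f c = i), v i c := hAsum i i
      rw [hAit, hAjt, hBjsum, hAisum]
      -- goal : Σ_{Bi} v i ≥ Σ_{Bj.erase c0} v i + v i c0 - u i t
      have h5 : v i c0 - u i t ≤ 0 := by rw [← hCc0t]; exact htP
      have h6 : ∑ c ∈ Q.erase c0, v i c
          ≤ ∑ c ∈ Finset.univ.filter (fun c => f c = i), v i c := hc0sum
      linarith [hBjsplit, hrest]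
  · -- envy-freeable
    set w : Fin n → Fin n → ℝ :=
      fun i j => (∑ t ∈ A j, u i t) - (∑ t ∈ A i, u i t) with hwdef
    have hw : ∀ i, w i i = 0 := fun i => sub_self _
    have hrelabel : ∀ σ : Equiv.Perm (Fin n),
        ∑ i, ∑ t ∈ A (σ i), u i t = ∑ c, v (σ.symm (f c)) c := by
      intro σ
      have h1 : ∀ i : Fin n, ∑ t ∈ A (σ i), u i t
          = ∑ c, if f c = σ i then v i c else 0 := by
        intro i
        rw [hAsum i (σ i), Finset.sum_filter]
      calc ∑ i, ∑ t ∈ A (σ i), u i t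
          = ∑ i, ∑ c, if f c = σ i then v i c else 0 :=
            Finset.sum_congr rfl fun i _ => h1 i
        _ = ∑ c, ∑ i, if f c = σ i then v i c else 0 := Finset.sum_comm
        _ = ∑ c, v (σ.symm (f c)) c := by
            refine Finset.sum_congr rfl fun c _ => ?_
            have : ∀ i : Fin n, (if f c = σ i then v i c else 0)
                = (if i = σ.symm (f c) then v i c else 0) := by
              intro i
              congr 1
              rw [eq_iff_iff]
              rw [Equiv.eq_symm_apply]
              exact ⟨fun h => h.symm, fun h => h.symm⟩
            rw [Finset.sum_congr rfl fun i _ => this i]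
            rw [Finset.sum_ite_eq' Finset.univ (σ.symm (f c)) (fun i => v i c)]
            rw [if_pos (Finset.mem_univ _)]
    have hperm : ∀ σ : Equiv.Perm (Fin n), ∑ i, w i (σ i) ≤ 0 := by
      intro σ
      have h1 := hrelabel σ
      have h2 := hrelabel (Equiv.refl (Fin n))
      simp only [Equiv.refl_apply, Equiv.refl_symm] at h2
      have h3 := hf3 (σ.symm) σ.symm.injective
      have h4 : ∑ i, w i (σ i)
          = (∑ i, ∑ t ∈ A (σ i), u i t) - ∑ i, ∑ t ∈ A i, u i t := by
        rw [hwdef, Finset.sum_sub_distrib]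
      rw [h4, h1]
      have h5 : ∑ i, ∑ t ∈ A i, u i t = ∑ c, v (f c) c := by
        have := hrelabel (Equiv.refl (Fin n))
        simpa using this
      rw [h5]
      have h6 : ∑ c, v (Equiv.symm σ (f c)) c ≤ ∑ c, v (f c) c := h3
      linarith
    obtain ⟨p, hp0, hpw⟩ := EF1Meta.exists_payments hn w hw hperm
    refine ⟨p, hp0, fun i j => ?_⟩
    have := hpw i j
    rw [hwdef] at this
    simp only at this
    linarith
end

section
/- Let M_A and M_B be disjoint finite sets of indivisible items and let the same n agents have additive utilities over M_A ∪ M_B. If A = (A_1,…,A_n) is an envy-freeable allocation of M_A and B = (B_1,…,B_n) is an envy-freeable allocation of M_B, then the combined allocation (A_1 ∪ B_1,…,A_n ∪ B_n) of M_A ∪ M_B is envy-freeable. -/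
/-- If `A` is an envy-freeable allocation of a finite item set `M_A` and `B` is
an envy-freeable allocation of a disjoint finite item set `M_B` (same agents, additive
utilities), then the combined allocation `(A_1 ∪ B_1, …, A_n ∪ B_n)` of `M_A ∪ M_B` is
envy-freeable. -/
theorem envy_freeable_union
    (n : ℕ) (I : Type) [Fintype I] [DecidableEq I]
    (u : Fin n → I → ℝ)
    (MA MB : Finset I) (hMAB : Disjoint MA MB)
    (A B : Fin n → Finset I)
    -- A is a partition of M_A
    (hA_disj : ∀ i j, i ≠ j → Disjoint (A i) (A j))
    (hA_cover : Finset.univ.biUnion A = MA)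
    -- B is a partition of M_B
    (hB_disj : ∀ i j, i ≠ j → Disjoint (B i) (B j))
    (hB_cover : Finset.univ.biUnion B = MB)
    -- A is envy-freeable
    (hA_ef : ∃ p : Fin n → ℝ, (∀ i, 0 ≤ p i) ∧
      ∀ i j : Fin n, (∑ t ∈ A i, u i t) + p i ≥ (∑ t ∈ A j, u i t) + p j)
    -- B is envy-freeable
    (hB_ef : ∃ p : Fin n → ℝ, (∀ i, 0 ≤ p i) ∧
      ∀ i j : Fin n, (∑ t ∈ B i, u i t) + p i ≥ (∑ t ∈ B j, u i t) + p j) :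
    -- the combined allocation is envy-freeable
    ∃ p : Fin n → ℝ, (∀ i, 0 ≤ p i) ∧
      ∀ i j : Fin n,
        (∑ t ∈ A i ∪ B i, u i t) + p i ≥ (∑ t ∈ A j ∪ B j, u i t) + p j := by
  obtain ⟨p, hp0, hp⟩ := hA_ef
  obtain ⟨q, hq0, hq⟩ := hB_ef
  have hAB : ∀ i j, Disjoint (A i) (B j) := by
    intro i j
    exact (hMAB.mono (hA_cover ▸ Finset.subset_biUnion_of_mem A (Finset.mem_univ i))
      (hB_cover ▸ Finset.subset_biUnion_of_mem B (Finset.mem_univ j)))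
  have hsum : ∀ (i j : Fin n), (∑ t ∈ A j ∪ B j, u i t)
      = (∑ t ∈ A j, u i t) + (∑ t ∈ B j, u i t) := by
    intro i j
    exact Finset.sum_union (hAB j j)
  refine ⟨fun i => p i + q i, fun i => add_nonneg (hp0 i) (hq0 i), fun i j => ?_⟩
  rw [hsum i i, hsum i j]
  have := add_le_add (hp i j) (hq i j)
  dsimp only
  linarith
end
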